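/- arXiv:1110.2564 — 4 statements merged into one kernel-verified Lean document; each statement's English description precedes it below -/
import Mathlib

section
/- Let F be a Ferrers board. The map sending a full rook placement P to the sequence S(P,F) is injective on S_F(231): if P and Q are 231-avoiding full rook placements on F with S(P,F) = S(Q,F), then P = Q. -/
/-!
Common definitions: Ferrers boards, rook placements, pattern avoidance,
following Bloom–Saracino, "A Simple Bijection Between 231-Avoiding and
312-Avoiding Placements".

A square of the `n × n` array `𝒜` is recorded by the pair
`(column index, row index)` (0-based), i.e. the square `(c, r)` is the unit
square with SW corner `(c, r)` and NE corner `(c+1, r+1)`.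
-/

/-- A square of the grid, given by its (column index, row index), both 0-based. -/
abbrev Square : Type := ℕ × ℕ

/-- For a vertex `V = (a, b)`, `RV V` is the set of squares of the rectangle `R(V)`
bounded by the lines `x = 0`, `x = a`, `y = 0`, `y = b`: all squares with column
index `< a` and row index `< b`. -/
def RV (V : ℕ × ℕ) : Finset Square := Finset.range V.1 ×ˢ Finset.range V.2

/-- A Ferrers board contained in the `n × n` array `𝒜`: a set of squares such that
`R(V) ⊆ F` for every vertex `V` of `F`, i.e. a downward- and leftward-closed set
of squares. -/
structure FerrersBoard (n : ℕ) where
  squares : Finset Square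
  inArray : ∀ s ∈ squares, s.1 < n ∧ s.2 < n
  closed : ∀ s ∈ squares, ∀ t : Square, t.1 ≤ s.1 → t.2 ≤ s.2 → t ∈ squares

namespace FerrersBoard

variable {n : ℕ}

/-- The number of squares in column `c` of `F`. -/
def colHeight (F : FerrersBoard n) (c : ℕ) : ℕ :=
  (F.squares.filter fun s => s.1 = c).card

/-- The number of squares in row `r` of `F`. -/
def rowWidth (F : FerrersBoard n) (r : ℕ) : ℕ :=
  (F.squares.filter fun s => s.2 = r).card

/-- The length of the longest row of `F` (the bottom row, by closedness),
i.e. the number of nonempty columns of `F`. -/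
def width (F : FerrersBoard n) : ℕ := F.rowWidth 0

/-- The length of the longest column of `F` (the leftmost column, by closedness),
i.e. the number of nonempty rows of `F`. -/
def height (F : FerrersBoard n) : ℕ := F.colHeight 0

/-- `V` is a vertex of `F`, i.e. a corner of one of the squares of `F`. -/
def IsVertex (F : FerrersBoard n) (V : ℕ × ℕ) : Prop :=
  ∃ s ∈ F.squares, (V.1 = s.1 ∨ V.1 = s.1 + 1) ∧ (V.2 = s.2 ∨ V.2 = s.2 + 1)

/-- `V = (a, b)` lies on the right/up border of `F` (the border of `F` excluding
its vertical left-hand side and horizontal bottom): this border is the staircase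
lattice path from the top-left corner `(0, height F)` down to `(width F, 0)`, and
its vertices are exactly those `(a, b)` with `a ≤ width F` and
`colHeight a ≤ b ≤ colHeight (a - 1)` (where for `a = 0` truncated subtraction
makes the condition read `b = height F`). -/
def IsBorderVertex (F : FerrersBoard n) (V : ℕ × ℕ) : Prop :=
  V.1 ≤ F.width ∧ F.colHeight V.1 ≤ V.2 ∧ V.2 ≤ F.colHeight (V.1 - 1)

/-- `V1, V2` are `F`-diagonal vertices: both lie on the right/up border of `F`
and they are the left and right ends of a diagonal of slope `-1` lying entirely
within `F` (the diagonal from `V1 = (a, b)` to `V2 = (a + k, b - k)` passes, for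
each `0 ≤ i < k`, through the square with column `a + i` and row `b - i - 1`,
and all these squares must belong to `F`). -/
def DiagonalVertices (F : FerrersBoard n) (V1 V2 : ℕ × ℕ) : Prop :=
  F.IsBorderVertex V1 ∧ F.IsBorderVertex V2 ∧
    ∃ k : ℕ, V2.1 = V1.1 + k ∧ V1.2 = V2.2 + k ∧
      ∀ i < k, (V1.1 + i, V2.2 + (k - 1 - i)) ∈ F.squares

end FerrersBoard

/-- `V1` is directly to the left of `V2`. -/
def LeftOf (V1 V2 : ℕ × ℕ) : Prop := V2.1 = V1.1 + 1 ∧ V2.2 = V1.2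

/-- `V1` is directly below `V2`. -/
def Below (V1 V2 : ℕ × ℕ) : Prop := V2.1 = V1.1 ∧ V2.2 = V1.2 + 1

/-- `P` is a rook placement on the Ferrers board `F`: a subset of `F` containing
at most one square (marker) from each column and at most one from each row. -/
def IsRookPlacement {n : ℕ} (F : FerrersBoard n) (P : Finset Square) : Prop :=
  P ⊆ F.squares ∧ (∀ x ∈ P, ∀ y ∈ P, x.1 = y.1 → x = y) ∧
    (∀ x ∈ P, ∀ y ∈ P, x.2 = y.2 → x = y)

/-- `P` is a full rook placement on `F`: a rook placement with exactly one marker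
in each (nonempty) column and each (nonempty) row of `F`. -/
def IsFullPlacement {n : ℕ} (F : FerrersBoard n) (P : Finset Square) : Prop :=
  IsRookPlacement F P ∧
    ∀ s ∈ F.squares, (∃ r, (s.1, r) ∈ P) ∧ (∃ c, (c, s.2) ∈ P)

/-- The set of markers `M` contains an occurrence of the pattern `τ ∈ S₃`:
three markers, listed with strictly increasing columns, whose rows are ordered
as the values of `τ`. -/
def ContainsPattern (M : Finset Square) (τ : Equiv.Perm (Fin 3)) : Prop :=
  ∃ m : Fin 3 → Square, (∀ i, m i ∈ M) ∧
    (∀ i j : Fin 3, i < j → (m i).1 < (m j).1) ∧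
    (∀ i j : Fin 3, (m i).2 < (m j).2 ↔ τ i < τ j)

/-- The rook placement `P` on `F` avoids `τ`: for every vertex `V` on the
right/up border of `F`, the restriction of `P` to `R(V)` (equivalently, the
permutation order-isomorphic to it) avoids `τ`. -/
def AvoidsOn {n : ℕ} (F : FerrersBoard n) (P : Finset Square)
    (τ : Equiv.Perm (Fin 3)) : Prop :=
  ∀ V : ℕ × ℕ, F.IsBorderVertex V → ¬ ContainsPattern (P ∩ RV V) τ

/-- The pattern 231 (in one-line notation), as a permutation of `Fin 3`. -/
def perm231 : Equiv.Perm (Fin 3) := ⟨![1, 2, 0], ![2, 0, 1], by decide, by decide⟩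

/-- The pattern 312 (in one-line notation), as a permutation of `Fin 3`. -/
def perm312 : Equiv.Perm (Fin 3) := ⟨![2, 0, 1], ![1, 2, 0], by decide, by decide⟩

/-- The maximal length of an increasing sequence of markers of `M`. -/
noncomputable def maxIncSeq (M : Finset Square) : ℕ :=
  sSup {k : ℕ | ∃ f : Fin k → Square, (∀ i, f i ∈ M) ∧
    ∀ i j : Fin k, i < j → (f i).1 < (f j).1 ∧ (f i).2 < (f j).2}

/-- `S(P, V)`: the maximal length of an increasing sequence of markers of `P`
inside the rectangle `R(V)`.  The function `fun V => SPV P V`, restricted to the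
vertices of the right/up border of `F`, is the sequence `S(P, F)`. -/
noncomputable def SPV (P : Finset Square) (V : ℕ × ℕ) : ℕ := maxIncSeq (P ∩ RV V)

/-- The `S ↦ S⁺` operation on `F`-sequences, relative to the function
`N = N(F, ·)` counting markers in rectangles: `S⁺(V) = 0` if `S V = 0`, and
`S⁺(V) = N V + 1 - S V` otherwise. -/
def plusSeq (N S : ℕ × ℕ → ℕ) : ℕ × ℕ → ℕ :=
  fun V => if S V = 0 then 0 else N V + 1 - S V

/-- The 231-conditions for the pair `(F, S)`: monotonicity, the 0-conditions and
the (231-)diagonal condition. -/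
def Conditions231 {n : ℕ} (F : FerrersBoard n) (S : ℕ × ℕ → ℕ) : Prop :=
  -- (i) monotonicity conditions
  (∀ V1 V2 : ℕ × ℕ, F.IsBorderVertex V1 → F.IsBorderVertex V2 →
    (LeftOf V1 V2 ∨ Below V1 V2) → S V1 ≤ S V2 ∧ S V2 ≤ S V1 + 1) ∧
  -- (ii) 0-conditions: first and last values are 0, no two consecutive 0s
  S (0, F.height) = 0 ∧ S (F.width, 0) = 0 ∧
  (∀ V1 V2 : ℕ × ℕ, F.IsBorderVertex V1 → F.IsBorderVertex V2 →
    (LeftOf V1 V2 ∨ Below V1 V2) → ¬(S V1 = 0 ∧ S V2 = 0)) ∧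
  -- (iii) diagonal condition
  (∀ V1 V2 : ℕ × ℕ, F.DiagonalVertices V1 V2 → S V1 ≤ S V2)

/-- The 312-conditions for the pair `(F, S)`: the same as the 231-conditions,
with the inequality in the diagonal condition reversed. -/
def Conditions312 {n : ℕ} (F : FerrersBoard n) (S : ℕ × ℕ → ℕ) : Prop :=
  (∀ V1 V2 : ℕ × ℕ, F.IsBorderVertex V1 → F.IsBorderVertex V2 →
    (LeftOf V1 V2 ∨ Below V1 V2) → S V1 ≤ S V2 ∧ S V2 ≤ S V1 + 1) ∧
  S (0, F.height) = 0 ∧ S (F.width, 0) = 0 ∧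
  (∀ V1 V2 : ℕ × ℕ, F.IsBorderVertex V1 → F.IsBorderVertex V2 →
    (LeftOf V1 V2 ∨ Below V1 V2) → ¬(S V1 = 0 ∧ S V2 = 0)) ∧
  (∀ V1 V2 : ℕ × ℕ, F.DiagonalVertices V1 V2 → S V2 ≤ S V1)


namespace BS231

open Finset

@[simp] lemma mem_RV {s : Square} {V : ℕ × ℕ} : s ∈ RV V ↔ s.1 < V.1 ∧ s.2 < V.2 := by
  simp [RV, Finset.mem_product]

lemma RV_mono {V W : ℕ × ℕ} (h1 : V.1 ≤ W.1) (h2 : V.2 ≤ W.2) : RV V ⊆ RV W := by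
  intro s hs; rw [mem_RV] at hs ⊢; omega

/-- there is an increasing sequence of length `k` in `M`. -/
def IncSeq (M : Finset Square) (k : ℕ) : Prop :=
  ∃ f : Fin k → Square, (∀ i, f i ∈ M) ∧
    ∀ i j : Fin k, i < j → (f i).1 < (f j).1 ∧ (f i).2 < (f j).2

lemma incSeq_zero (M : Finset Square) : IncSeq M 0 :=
  ⟨Fin.elim0, fun i => i.elim0, fun i => i.elim0⟩

lemma incSeq_le_card {M : Finset Square} {k : ℕ} (h : IncSeq M k) : k ≤ M.card := by
  classical
  obtain ⟨f, hf, hmono⟩ := h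
  have key : (Finset.univ : Finset (Fin k)).card ≤ M.card := by
    apply Finset.card_le_card_of_injOn f (fun i _ => hf i)
    intro i _ j _ hij
    rcases lt_trichotomy i j with h' | h' | h'
    · exact absurd ((hmono i j h').1) (by rw [hij]; omega)
    · exact h'
    · exact absurd ((hmono j i h').1) (by rw [hij]; omega)
  simpa using key

lemma maxIncSeq_spec (M : Finset Square) : IncSeq M (maxIncSeq M) := by
  have h : sSup {k | IncSeq M k} ∈ {k | IncSeq M k} :=
    Nat.sSup_mem ⟨0, incSeq_zero M⟩ ⟨M.card, fun _ hk => incSeq_le_card hk⟩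
  exact h

lemma le_maxIncSeq {M : Finset Square} {k : ℕ} (h : IncSeq M k) : k ≤ maxIncSeq M :=
  le_csSup ⟨M.card, fun _ hk => incSeq_le_card hk⟩ h

lemma incSeq_mono {M N : Finset Square} {k : ℕ} (hMN : M ⊆ N) (h : IncSeq M k) :
    IncSeq N k := by
  obtain ⟨f, hf, hmono⟩ := h
  exact ⟨f, fun i => hMN (hf i), hmono⟩

lemma maxIncSeq_mono {M N : Finset Square} (h : M ⊆ N) : maxIncSeq M ≤ maxIncSeq N :=
  le_maxIncSeq (incSeq_mono h (maxIncSeq_spec M))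

lemma maxIncSeq_append {M N : Finset Square} {x : Square}
    (hx : ∀ m ∈ M, m.1 < x.1 ∧ m.2 < x.2) (hxN : x ∈ N) (hMN : M ⊆ N) :
    maxIncSeq M + 1 ≤ maxIncSeq N := by
  obtain ⟨f, hf, hmono⟩ := maxIncSeq_spec M
  apply le_maxIncSeq
  refine ⟨fun i => if h : (i : ℕ) < maxIncSeq M then f ⟨i, h⟩ else x,
    fun i => ?_, fun i j hij => ?_⟩
  · show (if h : (i : ℕ) < maxIncSeq M then f ⟨i, h⟩ else x) ∈ N
    by_cases h : (i : ℕ) < maxIncSeq M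
    · rw [dif_pos h]; exact hMN (hf _)
    · rw [dif_neg h]; exact hxN
  · show ((if h : (i : ℕ) < maxIncSeq M then f ⟨i, h⟩ else x)).1 <
        ((if h : (j : ℕ) < maxIncSeq M then f ⟨j, h⟩ else x)).1
      ∧ ((if h : (i : ℕ) < maxIncSeq M then f ⟨i, h⟩ else x)).2 <
        ((if h : (j : ℕ) < maxIncSeq M then f ⟨j, h⟩ else x)).2
    have hij' : (i : ℕ) < (j : ℕ) := hij
    have hj : (j : ℕ) ≤ maxIncSeq M := Nat.lt_succ_iff.mp j.2
    have hi : (i : ℕ) < maxIncSeq M := lt_of_lt_of_le hij' hj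
    rw [dif_pos hi]
    by_cases h : (j : ℕ) < maxIncSeq M
    · rw [dif_pos h]
      exact hmono ⟨i, hi⟩ ⟨j, h⟩ (Fin.mk_lt_mk.mpr hij')
    · rw [dif_neg h]
      exact hx _ (hf ⟨i, hi⟩)

lemma SPV_def (P : Finset Square) (V : ℕ × ℕ) : SPV P V = maxIncSeq (P ∩ RV V) := rfl

lemma SPV_mono {P : Finset Square} {V W : ℕ × ℕ} (h1 : V.1 ≤ W.1) (h2 : V.2 ≤ W.2) :
    SPV P V ≤ SPV P W :=
  maxIncSeq_mono (Finset.inter_subset_inter (subset_refl P) (RV_mono h1 h2))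

section Board

variable {n : ℕ} (F : FerrersBoard n)

lemma lower_mem_iff {S : Finset ℕ} (hS : ∀ x ∈ S, ∀ y, y ≤ x → y ∈ S) {x : ℕ} :
    x ∈ S ↔ x < S.card := by
  constructor
  · intro hx
    have hsub : Finset.range (x + 1) ⊆ S := fun y hy =>
      hS x hx y (Nat.lt_succ_iff.mp (Finset.mem_range.mp hy))
    have := Finset.card_le_card hsub
    simpa using this
  · intro hx
    by_contra hmem
    have hsub : S ⊆ Finset.range x := by
      intro s hs
      rcases lt_or_ge s x with h | h
      · exact Finset.mem_range.mpr h
      · exact absurd (hS s hs x h) hmem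
    have := Finset.card_le_card hsub
    simp at this; omega

lemma mem_iff_lt_colHeight (c r : ℕ) : (c, r) ∈ F.squares ↔ r < F.colHeight c := by
  classical
  set S := F.squares.filter (fun s => s.1 = c) with hSdef
  have hcard : F.colHeight c = (S.image Prod.snd).card := by
    rw [FerrersBoard.colHeight, Finset.card_image_of_injOn]
    intro x hx y hy hxy
    have hx1 : x.1 = c := (Finset.mem_filter.mp hx).2
    have hy1 : y.1 = c := (Finset.mem_filter.mp hy).2
    exact Prod.ext (hx1.trans hy1.symm) hxy
  have hmem : ∀ r' : ℕ, ((c, r') ∈ F.squares ↔ r' ∈ S.image Prod.snd) := by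
    intro r'
    simp only [hSdef, Finset.mem_image, Finset.mem_filter]
    constructor
    · intro h; exact ⟨(c, r'), ⟨h, rfl⟩, rfl⟩
    · rintro ⟨s, ⟨hs, h1⟩, h2⟩
      have : s = (c, r') := Prod.ext h1 h2
      rwa [this] at hs
  have hlow : ∀ x ∈ S.image Prod.snd, ∀ y, y ≤ x → y ∈ S.image Prod.snd := by
    intro x hx y hyx
    rw [← hmem] at hx ⊢
    exact F.closed _ hx (c, y) (le_refl c) hyx
  rw [hmem, hcard]
  exact lower_mem_iff hlow

lemma colHeight_antitone {c c' : ℕ} (h : c ≤ c') : F.colHeight c' ≤ F.colHeight c := by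
  rcases Nat.eq_zero_or_pos (F.colHeight c') with h0 | h0
  · omega
  · have h1 : (c', F.colHeight c' - 1) ∈ F.squares :=
      (mem_iff_lt_colHeight F c' _).mpr (by omega)
    have h2 : (c, F.colHeight c' - 1) ∈ F.squares :=
      F.closed _ h1 (c, F.colHeight c' - 1) h (le_refl _)
    have := (mem_iff_lt_colHeight F c _).mp h2
    omega

lemma lt_width_iff (c : ℕ) : c < F.width ↔ 0 < F.colHeight c := by
  classical
  set S := F.squares.filter (fun s => s.2 = 0) with hSdef
  have hcard : F.width = (S.image Prod.fst).card := by
    rw [FerrersBoard.width, FerrersBoard.rowWidth, Finset.card_image_of_injOn]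
    intro x hx y hy hxy
    have hx1 : x.2 = 0 := (Finset.mem_filter.mp hx).2
    have hy1 : y.2 = 0 := (Finset.mem_filter.mp hy).2
    exact Prod.ext hxy (hx1.trans hy1.symm)
  have hmem : ∀ c' : ℕ, ((c', 0) ∈ F.squares ↔ c' ∈ S.image Prod.fst) := by
    intro c'
    simp only [hSdef, Finset.mem_image, Finset.mem_filter]
    constructor
    · intro h; exact ⟨(c', 0), ⟨h, rfl⟩, rfl⟩
    · rintro ⟨s, ⟨hs, h1⟩, h2⟩
      have : s = (c', 0) := Prod.ext h2 h1
      rwa [this] at hs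
  have hlow : ∀ x ∈ S.image Prod.fst, ∀ y, y ≤ x → y ∈ S.image Prod.fst := by
    intro x hx y hyx
    rw [← hmem] at hx ⊢
    exact F.closed _ hx (y, 0) hyx (le_refl _)
  have : (c, 0) ∈ F.squares ↔ c < F.width := by
    rw [hmem, hcard]; exact lower_mem_iff hlow
  rw [← this, mem_iff_lt_colHeight]

lemma colHeight_width : F.colHeight F.width = 0 := by
  by_contra h
  have := (lt_width_iff F F.width).mpr (by omega)
  omega

lemma mem_lt_width {c r : ℕ} (h : (c, r) ∈ F.squares) : c < F.width := by
  rw [lt_width_iff]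
  have := (mem_iff_lt_colHeight F c r).mp h
  omega

lemma mem_lt_height {c r : ℕ} (h : (c, r) ∈ F.squares) : r < F.height := by
  have h1 := (mem_iff_lt_colHeight F c r).mp h
  have h2 := colHeight_antitone F (Nat.zero_le c)
  rw [FerrersBoard.height]
  omega

end Board

end BS231

namespace BS231

section Placement

variable {n : ℕ} (F : FerrersBoard n) {P : Finset Square}

lemma col_unique (hP : IsFullPlacement F P) {c r1 r2 : ℕ}
    (h1 : (c, r1) ∈ P) (h2 : (c, r2) ∈ P) : r1 = r2 := by
  have := hP.1.2.1 _ h1 _ h2 rfl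
  exact congrArg Prod.snd this

lemma row_unique (hP : IsFullPlacement F P) {c1 c2 r : ℕ}
    (h1 : (c1, r) ∈ P) (h2 : (c2, r) ∈ P) : c1 = c2 := by
  have := hP.1.2.2 _ h1 _ h2 rfl
  exact congrArg Prod.fst this

lemma exists_col_marker (hP : IsFullPlacement F P) {c : ℕ} (hc : 0 < F.colHeight c) :
    ∃ r, (c, r) ∈ P :=
  (hP.2 (c, 0) ((mem_iff_lt_colHeight F c 0).mpr hc)).1

lemma exists_row_marker (hP : IsFullPlacement F P) {r : ℕ} (hr : r < F.height) :
    ∃ c, (c, r) ∈ P :=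
  (hP.2 (0, r) ((mem_iff_lt_colHeight F 0 r).mpr hr)).2

/-- Key consequence of 231-avoidance: markers to the left of column `a`,
with rows strictly between the row of column `a`'s marker and `colHeight a`,
form a decreasing sequence. -/
lemma no_rise_above (hP : IsFullPlacement F P) (hav : AvoidsOn F P perm231)
    {a r : ℕ} (hmem : (a, r) ∈ P) {m1 m2 : Square} (h1 : m1 ∈ P) (h2 : m2 ∈ P)
    (hc12 : m1.1 < m2.1) (hc2 : m2.1 < a) (hr1 : r < m1.2) (hr2 : m1.2 < m2.2)
    (hH : m2.2 < F.colHeight a) : False := by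
  have haF : (a, r) ∈ F.squares := hP.1.1 hmem
  have hawidth : a < F.width := mem_lt_width F haF
  have hra : r < F.colHeight a := (mem_iff_lt_colHeight F a r).mp haF
  have hborder : F.IsBorderVertex (a + 1, F.colHeight a) := by
    refine ⟨Nat.succ_le_of_lt hawidth, ?_, ?_⟩
    · exact colHeight_antitone F (Nat.le_succ a)
    · show F.colHeight a ≤ F.colHeight (a + 1 - 1)
      simp
  apply hav _ hborder
  refine ⟨![m1, m2, (a, r)], ?_, ?_, ?_⟩
  · intro i
    fin_cases i
    · show m1 ∈ P ∩ RV (a + 1, F.colHeight a)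
      rw [Finset.mem_inter, mem_RV]
      exact ⟨h1, by omega, by omega⟩
    · show m2 ∈ P ∩ RV (a + 1, F.colHeight a)
      rw [Finset.mem_inter, mem_RV]
      exact ⟨h2, by omega, by omega⟩
    · show (a, r) ∈ P ∩ RV (a + 1, F.colHeight a)
      rw [Finset.mem_inter, mem_RV]
      exact ⟨hmem, by omega, by omega⟩
  · intro i j hij
    fin_cases i <;> fin_cases j
    · exact absurd hij (by decide)
    · show m1.1 < m2.1
      omega
    · show m1.1 < (a, r).1
      show m1.1 < a
      omega
    · exact absurd hij (by decide)
    · exact absurd hij (by decide)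
    · show m2.1 < (a, r).1
      show m2.1 < a
      omega
    · exact absurd hij (by decide)
    · exact absurd hij (by decide)
    · exact absurd hij (by decide)
  · intro i j
    fin_cases i <;> fin_cases j
    · exact iff_of_false (show ¬(m1.2 < m1.2) by omega) (by decide)
    · exact iff_of_true hr2 (by decide)
    · exact iff_of_false (show ¬(m1.2 < r) by omega) (by decide)
    · exact iff_of_false (show ¬(m2.2 < m1.2) by omega) (by decide)
    · exact iff_of_false (show ¬(m2.2 < m2.2) by omega) (by decide)
    · exact iff_of_false (show ¬(m2.2 < r) by omega) (by decide)
    · exact iff_of_true hr1 (by decide)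
    · exact iff_of_true (lt_trans hr1 hr2) (by decide)
    · exact iff_of_false (show ¬(r < r) by omega) (by decide)

end Placement

end BS231

namespace BS231

section Core

variable {n : ℕ} (F : FerrersBoard n) {P : Finset Square}

/-- Core decomposition: any increasing sequence in a rectangle `R(a', b)` with
`a' ≤ a+1`, `b ≤ colHeight a`, where `(a, r)` is the marker of column `a`,
has at most one element at/above row `r`, which must be the last one. -/
lemma core (hP : IsFullPlacement F P) (hav : AvoidsOn F P perm231)
    {a r b a' k : ℕ} (hmem : (a, r) ∈ P) (hb : b ≤ F.colHeight a) (ha' : a' ≤ a + 1)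
    (h : IncSeq (P ∩ RV (a', b)) k) :
    k ≤ maxIncSeq (P ∩ RV (a, r)) + 1 ∧
      (a' ≤ a → maxIncSeq (P ∩ RV (a, r)) + 1 ≤ k →
        ∃ c ρ, (c, ρ) ∈ P ∧ c < a ∧ r < ρ ∧ ρ < b ∧
          maxIncSeq (P ∩ RV (a, r)) ≤ maxIncSeq (P ∩ RV (c, r))) := by
  classical
  obtain ⟨f, hfM, hmono⟩ := h
  have hfP : ∀ i, f i ∈ P := fun i => (Finset.mem_inter.mp (hfM i)).1
  have hfa : ∀ i, (f i).1 < a' := fun i => (mem_RV.mp (Finset.mem_inter.mp (hfM i)).2).1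
  have hfb : ∀ i, (f i).2 < b := fun i => (mem_RV.mp (Finset.mem_inter.mp (hfM i)).2).2
  have hlow : ∀ i, (f i).2 < r → (f i).1 < a := by
    intro i hi
    rcases Nat.lt_or_ge (f i).1 a with h | h
    · exact h
    · exfalso
      have h1 : (f i).1 = a := by have := hfa i; omega
      have heq := hP.1.2.1 _ (hfP i) _ hmem h1
      rw [heq] at hi
      exact absurd hi (by omega)
  have hspec_lt : ∀ i j : Fin k, i < j → r ≤ (f i).2 → False := by
    intro i j hij hi
    have hrows := (hmono i j hij).2
    have hcols := (hmono i j hij).1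
    rcases eq_or_lt_of_le hi with hi' | hi'
    · have heq := hP.1.2.2 _ (hfP i) _ hmem hi'.symm
      have := hfa j
      rw [heq] at hcols
      have : a < (f j).1 := hcols
      omega
    · have hja : (f j).1 < a := by
        rcases Nat.lt_or_ge (f j).1 a with h | h
        · exact h
        · exfalso
          have h1 : (f j).1 = a := by have := hfa j; omega
          have heq := hP.1.2.1 _ (hfP j) _ hmem h1
          rw [heq] at hrows
          have : (f i).2 < r := hrows
          omega
      have hia : (f i).1 < a := by
        rcases Nat.lt_or_ge (f i).1 a with h | h
        · exact h
        · exfalso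
          have h1 : (f i).1 = a := by have := hfa i; omega
          have heq := hP.1.2.1 _ (hfP i) _ hmem h1
          rw [heq] at hi'
          have : r < r := hi'
          omega
      exact no_rise_above F hP hav hmem (hfP i) (hfP j) hcols hja hi' hrows
        (lt_of_lt_of_le (hfb j) hb)
  by_cases hex : ∃ i, r ≤ (f i).2
  · obtain ⟨i₀, hi₀⟩ := hex
    have hprefrow : ∀ j : Fin k, j < i₀ → (f j).2 < r := by
      intro j hj
      by_contra h
      exact hspec_lt j i₀ hj (le_of_not_gt h)
    have hpref : IncSeq (P ∩ RV ((f i₀).1, r)) (i₀ : ℕ) := by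
      refine ⟨fun j => f ⟨j.1, lt_trans j.2 i₀.2⟩, fun j => ?_, fun j1 j2 hj => ?_⟩
      · have hjlt : (⟨j.1, lt_trans j.2 i₀.2⟩ : Fin k) < i₀ := Fin.mk_lt_mk.mpr j.2
        exact Finset.mem_inter.mpr ⟨hfP _,
          mem_RV.mpr ⟨(hmono _ i₀ hjlt).1, hprefrow _ hjlt⟩⟩
      · exact hmono _ _ (Fin.mk_lt_mk.mpr hj)
    have hprefix_le : (i₀ : ℕ) ≤ maxIncSeq (P ∩ RV ((f i₀).1, r)) := le_maxIncSeq hpref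
    have hpref2 : IncSeq (P ∩ RV (a, r)) (i₀ : ℕ) := by
      refine ⟨fun j => f ⟨j.1, lt_trans j.2 i₀.2⟩, fun j => ?_, fun j1 j2 hj => ?_⟩
      · have hjlt : (⟨j.1, lt_trans j.2 i₀.2⟩ : Fin k) < i₀ := Fin.mk_lt_mk.mpr j.2
        exact Finset.mem_inter.mpr ⟨hfP _,
          mem_RV.mpr ⟨hlow _ (hprefrow _ hjlt), hprefrow _ hjlt⟩⟩
      · exact hmono _ _ (Fin.mk_lt_mk.mpr hj)
    have hpref2_le : (i₀ : ℕ) ≤ maxIncSeq (P ∩ RV (a, r)) := le_maxIncSeq hpref2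
    have hk_le : k ≤ (i₀ : ℕ) + 1 := by
      by_contra h
      push_neg at h
      have hlt : i₀ < (⟨(i₀ : ℕ) + 1, by omega⟩ : Fin k) := Fin.mk_lt_mk.mpr (by omega)
      exact hspec_lt i₀ _ hlt hi₀
    refine ⟨by omega, fun haa hkk => ?_⟩
    have hia : (f i₀).1 < a := lt_of_lt_of_le (hfa i₀) haa
    have hρ : r < (f i₀).2 := by
      rcases eq_or_lt_of_le hi₀ with h' | h'
      · exfalso
        have heq := hP.1.2.2 _ (hfP i₀) _ hmem h'.symm
        rw [heq] at hia
        exact absurd hia (by omega)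
      · exact h'
    refine ⟨(f i₀).1, (f i₀).2, ?_, hia, hρ, hfb i₀, by omega⟩
    rw [Prod.mk.eta]
    exact hfP i₀
  · push_neg at hex
    have hseq : IncSeq (P ∩ RV (a, r)) k :=
      ⟨f, fun i => Finset.mem_inter.mpr ⟨hfP i, mem_RV.mpr ⟨hlow i (hex i), hex i⟩⟩, hmono⟩
    have := le_maxIncSeq hseq
    exact ⟨by omega, fun _ h2 => absurd h2 (by omega)⟩

end Core

end BS231

namespace BS231

section Rec

variable {n : ℕ} (F : FerrersBoard n) {P Q : Finset Square}

/-- R1: below the marker of column `a`, column `a` contributes nothing. -/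
lemma inter_RV_succ_eq (hP : IsFullPlacement F P) {a r b : ℕ}
    (hmem : (a, r) ∈ P) (hb : b ≤ r) : P ∩ RV (a + 1, b) = P ∩ RV (a, b) := by
  ext s
  simp only [Finset.mem_inter, mem_RV]
  constructor
  · rintro ⟨hsP, h1, h2⟩
    refine ⟨hsP, ?_, h2⟩
    rcases Nat.lt_or_ge s.1 a with h | h
    · exact h
    · exfalso
      have h1' : s.1 = a := by omega
      have heq := hP.1.2.1 _ hsP _ hmem h1'
      rw [heq] at h2
      have : r < b := h2
      omega
  · rintro ⟨hsP, h1, h2⟩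
    exact ⟨hsP, by omega, h2⟩

lemma SPV_succ_low (hP : IsFullPlacement F P) {a r b : ℕ}
    (hmem : (a, r) ∈ P) (hb : b ≤ r) : SPV P (a + 1, b) = SPV P (a, b) := by
  rw [SPV_def, SPV_def, inter_RV_succ_eq F hP hmem hb]

/-- R2: just above the marker of column `a`, `S` jumps by exactly one. -/
lemma SPV_succ_high (hP : IsFullPlacement F P) (hav : AvoidsOn F P perm231)
    {a r b : ℕ} (hmem : (a, r) ∈ P) (h1 : r < b) (h2 : b ≤ F.colHeight a) :
    SPV P (a + 1, b) = SPV P (a, r) + 1 := by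
  apply le_antisymm
  · exact (core F hP hav hmem h2 (le_refl (a + 1)) (maxIncSeq_spec _)).1
  · refine maxIncSeq_append (x := (a, r)) ?_ ?_ ?_
    · intro m hm
      have := mem_RV.mp (Finset.mem_inter.mp hm).2
      exact this
    · exact Finset.mem_inter.mpr ⟨hmem, mem_RV.mpr ⟨by omega, by omega⟩⟩
    · exact Finset.inter_subset_inter (subset_refl P) (RV_mono (by omega) (by omega))

/-- Zone upper bound. -/
lemma SPV_zone_le (hP : IsFullPlacement F P) (hav : AvoidsOn F P perm231)
    {a r b : ℕ} (hmem : (a, r) ∈ P) (h1 : r < b) (h2 : b ≤ F.colHeight a) :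
    SPV P (a, b) ≤ SPV P (a, r) + 1 :=
  (core F hP hav hmem h2 (Nat.le_succ a) (maxIncSeq_spec _)).1

/-- Zone extraction: a sequence beating the bound must use a "zone marker" that
extends a maximal sequence. -/
lemma SPV_zone_ext (hP : IsFullPlacement F P) (hav : AvoidsOn F P perm231)
    {a r b : ℕ} (hmem : (a, r) ∈ P) (h1 : r < b) (h2 : b ≤ F.colHeight a)
    (hgt : SPV P (a, r) + 1 ≤ SPV P (a, b)) :
    ∃ c ρ, (c, ρ) ∈ P ∧ c < a ∧ r < ρ ∧ ρ < b ∧ SPV P (a, r) ≤ SPV P (c, r) :=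
  (core F hP hav hmem h2 (Nat.le_succ a) (maxIncSeq_spec _)).2 (le_refl a) hgt

/-- Zone use: an extending zone marker gives a long sequence. -/
lemma SPV_zone_use {a r b c ρ : ℕ} (hmemc : (c, ρ) ∈ P) (hc : c < a)
    (hρ1 : r < ρ) (hρ2 : ρ < b) : SPV P (c, r) + 1 ≤ SPV P (a, b) := by
  refine maxIncSeq_append (x := (c, ρ)) ?_ ?_ ?_
  · intro m hm
    have := mem_RV.mp (Finset.mem_inter.mp hm).2
    constructor
    · exact this.1
    · show m.2 < ρ
      omega
  · exact Finset.mem_inter.mpr ⟨hmemc, mem_RV.mpr ⟨by omega, by omega⟩⟩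
  · exact Finset.inter_subset_inter (subset_refl P) (RV_mono (by omega) (by omega))

/-- The zone direction lemma: equality of border values forces the zone values
of `P` and `Q` at level `a` to coincide. -/
lemma zoneDir (hP : IsFullPlacement F P) (hQ : IsFullPlacement F Q)
    (hPav : AvoidsOn F P perm231) (hQav : AvoidsOn F Q perm231)
    (hS : ∀ V : ℕ × ℕ, F.IsBorderVertex V → SPV P V = SPV Q V)
    {a r b : ℕ} (hmP : (a, r) ∈ P) (hmQ : (a, r) ∈ Q)
    (hmrk : ∀ s : Square, a + 1 ≤ s.1 → (s ∈ P ↔ s ∈ Q))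
    (ht : SPV P (a, r) = SPV Q (a, r)) (hb1 : r < b) (hb2 : b < F.colHeight a)
    (hgt : SPV P (a, r) + 1 ≤ SPV P (a, b)) : SPV Q (a, r) + 1 ≤ SPV Q (a, b) := by
  have hw : a < F.width := mem_lt_width F (hP.1.1 hmP)
  have hrH : r < F.colHeight a := lt_trans hb1 hb2
  obtain ⟨c, ρ, hcρP, hca, hrρ, hρb, _⟩ :=
    SPV_zone_ext F hP hPav hmP hb1 (le_of_lt hb2) hgt
  have hbord : F.IsBorderVertex (a, F.colHeight a) :=
    ⟨le_of_lt hw, le_refl _, colHeight_antitone F (Nat.sub_le a 1)⟩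
  have htop : SPV Q (a, r) + 1 ≤ SPV Q (a, F.colHeight a) := by
    have hmono : SPV P (a, b) ≤ SPV P (a, F.colHeight a) :=
      SPV_mono (le_refl a) (le_of_lt hb2)
    have h2 := hS _ hbord
    omega
  obtain ⟨c₁, ρ₁, hc₁Q, hc₁a, hrρ₁, hρ₁H, hQpre⟩ :=
    SPV_zone_ext F hQ hQav hmQ hrH (le_refl _) htop
  have hρheight : ρ < F.height := mem_lt_height F (hP.1.1 hcρP)
  obtain ⟨c', hc'Q⟩ := exists_row_marker F hQ hρheight
  have hc'a : c' < a := by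
    rcases lt_trichotomy c' a with h | h | h
    · exact h
    · exfalso
      have heq := hQ.1.2.1 _ hc'Q _ hmQ h
      have : ρ = r := congrArg Prod.snd heq
      omega
    · exfalso
      have hc'P : (c', ρ) ∈ P := (hmrk (c', ρ) (by omega)).mpr hc'Q
      have heq := hP.1.2.2 _ hcρP _ hc'P rfl
      have : c = c' := congrArg Prod.fst heq
      omega
  rcases le_or_gt ρ₁ ρ with hle | hlt
  · have h3 : SPV Q (c₁, r) + 1 ≤ SPV Q (a, b) := SPV_zone_use hc₁Q hc₁a hrρ₁ (by omega)
    omega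
  · have hcc : c₁ ≤ c' := by
      by_contra hcon
      push_neg at hcon
      exact no_rise_above F hQ hQav hmQ hc'Q hc₁Q hcon hc₁a hrρ hlt hρ₁H
    have hmono2 : SPV Q (c₁, r) ≤ SPV Q (c', r) := SPV_mono hcc (le_refl r)
    have h3 : SPV Q (c', r) + 1 ≤ SPV Q (a, b) := SPV_zone_use hc'Q hc'a hrρ hρb
    omega

end Rec

end BS231

namespace BS231

section Main

variable {n : ℕ} (F : FerrersBoard n) {P Q : Finset Square}

/-- The markers of column `a` in `P` and `Q` cannot be at different rows. -/
lemma rEq_aux (hP : IsFullPlacement F P) (hQ : IsFullPlacement F Q)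
    (hPav : AvoidsOn F P perm231) (hQav : AvoidsOn F Q perm231)
    {a rP rQ : ℕ} (hmP : (a, rP) ∈ P) (hmQ : (a, rQ) ∈ Q) (hlt : rP < rQ)
    (hih : ∀ b ≤ F.colHeight a, SPV P (a + 1, b) = SPV Q (a + 1, b)) : False := by
  have hrQH : rQ < F.colHeight a := (mem_iff_lt_colHeight F a rQ).mp (hQ.1.1 hmQ)
  have hrPH : rP < F.colHeight a := by omega
  have c1 : SPV P (a + 1, rQ) = SPV P (a, rP) + 1 :=
    SPV_succ_high F hP hPav hmP hlt (le_of_lt hrQH)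
  have c2 : SPV P (a + 1, F.colHeight a) = SPV P (a, rP) + 1 :=
    SPV_succ_high F hP hPav hmP hrPH (le_refl _)
  have c3 : SPV Q (a + 1, rQ) = SPV Q (a, rQ) := SPV_succ_low F hQ hmQ (le_refl rQ)
  have c4 : SPV Q (a + 1, F.colHeight a) = SPV Q (a, rQ) + 1 :=
    SPV_succ_high F hQ hQav hmQ hrQH (le_refl _)
  have e1 : SPV P (a + 1, rQ) = SPV Q (a + 1, rQ) := hih rQ (le_of_lt hrQH)
  have e2 : SPV P (a + 1, F.colHeight a) = SPV Q (a + 1, F.colHeight a) :=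
    hih (F.colHeight a) (le_refl _)
  omega

/-- The inductive invariant: markers in columns `≥ a` agree, and the `S` values
at level `a` agree (for all heights up to `colHeight (a-1)`). -/
def InvP (F : FerrersBoard n) (P Q : Finset Square) (a : ℕ) : Prop :=
  (∀ s ∈ P, a ≤ s.1 → s ∈ Q) ∧ (∀ s ∈ Q, a ≤ s.1 → s ∈ P) ∧
    ∀ b ≤ F.colHeight (a - 1), SPV P (a, b) = SPV Q (a, b)

lemma base (hP : IsFullPlacement F P) (hQ : IsFullPlacement F Q)
    (hS : ∀ V : ℕ × ℕ, F.IsBorderVertex V → SPV P V = SPV Q V) :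
    InvP F P Q F.width := by
  refine ⟨?_, ?_, ?_⟩
  · intro s hs hle
    have : s.1 < F.width := mem_lt_width F (by rw [Prod.mk.eta] at *; exact hP.1.1 hs)
    omega
  · intro s hs hle
    have : s.1 < F.width := mem_lt_width F (by rw [Prod.mk.eta] at *; exact hQ.1.1 hs)
    omega
  · intro b hb
    refine hS (F.width, b) ⟨le_refl _, ?_, hb⟩
    show F.colHeight F.width ≤ b
    rw [colHeight_width]
    omega

lemma step (hP : IsFullPlacement F P) (hQ : IsFullPlacement F Q)
    (hPav : AvoidsOn F P perm231) (hQav : AvoidsOn F Q perm231)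
    (hS : ∀ V : ℕ × ℕ, F.IsBorderVertex V → SPV P V = SPV Q V)
    {a : ℕ} (hw : a < F.width) (ih : InvP F P Q (a + 1)) : InvP F P Q a := by
  obtain ⟨ih1, ih2, ih3⟩ := ih
  have ih3' : ∀ b ≤ F.colHeight a, SPV P (a + 1, b) = SPV Q (a + 1, b) := by
    intro b hb
    exact ih3 b (by simpa using hb)
  have hHa : 0 < F.colHeight a := (lt_width_iff F a).mp hw
  obtain ⟨rP, hmP⟩ := exists_col_marker F hP hHa
  obtain ⟨rQ, hmQ⟩ := exists_col_marker F hQ hHa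
  have hreq : rP = rQ := by
    rcases lt_trichotomy rP rQ with h | h | h
    · exact absurd (rEq_aux F hP hQ hPav hQav hmP hmQ h ih3') id
    · exact h
    · exact absurd (rEq_aux F hQ hP hQav hPav hmQ hmP h
        (fun b hb => (ih3' b hb).symm)) id
  subst hreq
  have hrPH : rP < F.colHeight a := (mem_iff_lt_colHeight F a rP).mp (hP.1.1 hmP)
  have hm1 : ∀ s ∈ P, a ≤ s.1 → s ∈ Q := by
    intro s hs hle
    rcases eq_or_lt_of_le hle with h | h
    · have heq := hP.1.2.1 _ hs _ hmP h.symm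
      rw [heq]
      exact hmQ
    · exact ih1 s hs h
  have hm2 : ∀ s ∈ Q, a ≤ s.1 → s ∈ P := by
    intro s hs hle
    rcases eq_or_lt_of_le hle with h | h
    · have heq := hQ.1.2.1 _ hs _ hmQ h.symm
      rw [heq]
      exact hmP
    · exact ih2 s hs h
  have case1 : ∀ b ≤ rP, SPV P (a, b) = SPV Q (a, b) := by
    intro b hb
    have eP : SPV P (a + 1, b) = SPV P (a, b) := SPV_succ_low F hP hmP hb
    have eQ : SPV Q (a + 1, b) = SPV Q (a, b) := SPV_succ_low F hQ hmQ hb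
    have := ih3' b (by omega)
    omega
  refine ⟨hm1, hm2, ?_⟩
  intro b hb
  rcases le_or_gt b rP with hcase | hcase
  · exact case1 b hcase
  rcases lt_or_ge b (F.colHeight a) with hcase2 | hcase2
  · -- zone case
    have ht : SPV P (a, rP) = SPV Q (a, rP) := case1 rP (le_refl rP)
    have hmrk : ∀ s : Square, a + 1 ≤ s.1 → (s ∈ P ↔ s ∈ Q) :=
      fun s h => ⟨fun hs => ih1 s hs h, fun hs => ih2 s hs h⟩
    have bP1 : SPV P (a, rP) ≤ SPV P (a, b) := SPV_mono (le_refl a) (le_of_lt hcase)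
    have bP2 : SPV P (a, b) ≤ SPV P (a, rP) + 1 :=
      SPV_zone_le F hP hPav hmP hcase (le_of_lt hcase2)
    have bQ1 : SPV Q (a, rP) ≤ SPV Q (a, b) := SPV_mono (le_refl a) (le_of_lt hcase)
    have bQ2 : SPV Q (a, b) ≤ SPV Q (a, rP) + 1 :=
      SPV_zone_le F hQ hQav hmQ hcase (le_of_lt hcase2)
    by_cases hzP : SPV P (a, rP) + 1 ≤ SPV P (a, b)
    · have := zoneDir F hP hQ hPav hQav hS hmP hmQ hmrk ht hcase hcase2 hzP
      omega
    · by_cases hzQ : SPV Q (a, rP) + 1 ≤ SPV Q (a, b)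
      · have := zoneDir F hQ hP hQav hPav (fun V hV => (hS V hV).symm) hmQ hmP
          (fun s h => (hmrk s h).symm) ht.symm hcase hcase2 hzQ
        omega
      · omega
  · -- border case
    exact hS (a, b) ⟨le_of_lt hw, hcase2, hb⟩

end Main

end BS231

/-- Theorem 1, 231 case.  If `P` and `Q` are 231-avoiding full
rook placements on a Ferrers board `F` with `S(P,F) = S(Q,F)` (i.e. the values
`S(P,V)` and `S(Q,V)` agree at every vertex `V` of the right/up border of `F`),
then `P = Q`. -/
theorem seq_injective_on_231 {n : ℕ} (F : FerrersBoard n) (P Q : Finset Square)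
    (hP : IsFullPlacement F P) (hQ : IsFullPlacement F Q)
    (hPavoid : AvoidsOn F P perm231) (hQavoid : AvoidsOn F Q perm231)
    (hS : ∀ V : ℕ × ℕ, F.IsBorderVertex V → SPV P V = SPV Q V) :
    P = Q := by
  have down : ∀ m a : ℕ, a + m = F.width → BS231.InvP F P Q a := by
    intro m
    induction m with
    | zero =>
      intro a ha
      have : a = F.width := by omega
      rw [this]
      exact BS231.base F hP hQ hS
    | succ m ihm =>
      intro a ha
      exact BS231.step F hP hQ hPavoid hQavoid hS (by omega) (ihm (a + 1) (by omega))
  have h0 := down F.width 0 (by omega)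
  ext s
  exact ⟨fun hs => h0.1 s hs (Nat.zero_le _), fun hs => h0.2.1 s hs (Nat.zero_le _)⟩
end

section
/- Let F be a Ferrers board. The map sending a full rook placement P to the sequence S(P,F) is injective on S_F(312): if P and Q are 312-avoiding full rook placements on F with S(P,F) = S(Q,F), then P = Q. -/
section BS312Aux

open Finset

/-- An increasing chain of length `k` in a finite set of squares. -/
def IncChain (M : Finset Square) (k : ℕ) (f : Fin k → Square) : Prop :=
  (∀ i, f i ∈ M) ∧ ∀ i j : Fin k, i < j → (f i).1 < (f j).1 ∧ (f i).2 < (f j).2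

lemma maxIncSeq_def (M : Finset Square) :
    maxIncSeq M = sSup {k | ∃ f : Fin k → Square, IncChain M k f} := rfl

lemma IncChain.card_le {M : Finset Square} {k : ℕ} {f : Fin k → Square}
    (h : IncChain M k f) : k ≤ M.card := by
  have hinj : Set.InjOn f ↑(Finset.univ : Finset (Fin k)) := by
    intro i _ j _ hij
    by_contra hne
    rcases lt_or_gt_of_ne hne with hlt | hlt
    · exact absurd (congrArg Prod.fst hij) (Nat.ne_of_lt (h.2 i j hlt).1)
    · exact absurd (congrArg Prod.fst hij) (Nat.ne_of_gt (h.2 j i hlt).1)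
  calc k = (Finset.univ : Finset (Fin k)).card := by simp
    _ ≤ M.card := Finset.card_le_card_of_injOn f (fun i _ => h.1 i) hinj

lemma incChain_bddAbove (M : Finset Square) :
    BddAbove {k | ∃ f : Fin k → Square, IncChain M k f} :=
  ⟨M.card, fun _ ⟨_, hf⟩ => hf.card_le⟩

lemma incChain_nonempty (M : Finset Square) :
    {k | ∃ f : Fin k → Square, IncChain M k f}.Nonempty :=
  ⟨0, fun i => i.elim0, fun i => i.elim0, fun i => i.elim0⟩

lemma maxIncSeq_spec (M : Finset Square) :
    ∃ f : Fin (maxIncSeq M) → Square, IncChain M (maxIncSeq M) f :=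
  Nat.sSup_mem (incChain_nonempty M) (incChain_bddAbove M)

lemma IncChain.le_maxIncSeq {M : Finset Square} {k : ℕ} {f : Fin k → Square}
    (h : IncChain M k f) : k ≤ maxIncSeq M :=
  le_csSup (incChain_bddAbove M) ⟨f, h⟩

lemma IncChain.le_maxIncSeq_of_mem {M N : Finset Square} {k : ℕ} {f : Fin k → Square}
    (h : IncChain M k f) (h2 : ∀ i, f i ∈ N) : k ≤ maxIncSeq N :=
  IncChain.le_maxIncSeq ⟨h2, h.2⟩

lemma maxIncSeq_mono {M N : Finset Square} (h : M ⊆ N) : maxIncSeq M ≤ maxIncSeq N := by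
  obtain ⟨f, hf⟩ := maxIncSeq_spec M
  exact hf.le_maxIncSeq_of_mem fun i => h (hf.1 i)

/-- Appending a dominating element to a maximal chain of `N ⊆ M`. -/
lemma append_dom {M N : Finset Square} {m : Square} (hm : m ∈ M) (hNM : N ⊆ M)
    (hdom : ∀ s ∈ N, s.1 < m.1 ∧ s.2 < m.2) : maxIncSeq N + 1 ≤ maxIncSeq M := by
  set k := maxIncSeq N with hk
  obtain ⟨f, hf⟩ := maxIncSeq_spec N
  have : IncChain M (k + 1)
      (fun i : Fin (k+1) => if h : (i : ℕ) < k then f ⟨i, h⟩ else m) := by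
    constructor
    · intro i
      dsimp only
      by_cases h : (i : ℕ) < k
      · rw [dif_pos h]; exact hNM (hf.1 _)
      · rw [dif_neg h]; exact hm
    · intro i j hij
      have hij' : (i : ℕ) < (j : ℕ) := hij
      dsimp only
      by_cases hj : (j : ℕ) < k
      · have hi : (i : ℕ) < k := lt_trans hij' hj
        rw [dif_pos hi, dif_pos hj]
        exact hf.2 ⟨i, hi⟩ ⟨j, hj⟩ hij'
      · by_cases hi : (i : ℕ) < k
        · rw [dif_pos hi, dif_neg hj]
          exact hdom _ (hf.1 ⟨i, hi⟩)
        · exfalso; have := i.isLt; have := j.isLt; omega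
  exact this.le_maxIncSeq

/-- In a chain, a "high" element (first coordinate `≥ x`) must be the last one,
and all other elements are "low", provided high elements of `M` are pairwise
non-increasing. -/
lemma top_high {M : Finset Square} {x k : ℕ} {f : Fin k → Square}
    (anti : ∀ s ∈ M, ∀ t ∈ M, x ≤ s.1 → x ≤ t.1 → s.1 < t.1 → ¬ s.2 < t.2)
    (hf : IncChain M k f) (i0 : Fin k) (hi0 : ¬ (f i0).1 < x) :
    (i0 : ℕ) + 1 = k ∧ ∀ j, j ≠ i0 → (f j).1 < x := by
  have hlow : ∀ j, j ≠ i0 → (f j).1 < x := by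
    intro j hj
    by_contra hjh
    rcases lt_or_gt_of_ne hj with h | h
    · exact anti _ (hf.1 j) _ (hf.1 i0) (le_of_not_gt hjh) (le_of_not_gt hi0)
        (hf.2 j i0 h).1 (hf.2 j i0 h).2
    · exact anti _ (hf.1 i0) _ (hf.1 j) (le_of_not_gt hi0) (le_of_not_gt hjh)
        (hf.2 i0 j h).1 (hf.2 i0 j h).2
  refine ⟨?_, hlow⟩
  by_contra htop
  have h1 : (i0 : ℕ) + 1 < k := by have := i0.isLt; omega
  set j : Fin k := ⟨(i0 : ℕ) + 1, h1⟩ with hjdef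
  have hji : i0 < j := by simp [hjdef, Fin.lt_def]
  have hlj := hlow j (by intro hc; rw [hc] at hji; exact lt_irrefl _ hji)
  have := (hf.2 i0 j hji).1
  omega

/-- Upper bound: if high elements are pairwise non-increasing, the LIS of `M`
exceeds that of its low part by at most one. -/
lemma maxIncSeq_le_low_succ {M : Finset Square} {x : ℕ}
    (anti : ∀ s ∈ M, ∀ t ∈ M, x ≤ s.1 → x ≤ t.1 → s.1 < t.1 → ¬ s.2 < t.2) :
    maxIncSeq M ≤ maxIncSeq (M.filter (fun s => s.1 < x)) + 1 := by
  set k := maxIncSeq M with hk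
  obtain ⟨f, hf⟩ := maxIncSeq_spec M
  by_cases hall : ∀ i, (f i).1 < x
  · have : k ≤ maxIncSeq (M.filter (fun s => s.1 < x)) :=
      hf.le_maxIncSeq_of_mem fun i => mem_filter.2 ⟨hf.1 i, hall i⟩
    omega
  · push_neg at hall
    obtain ⟨i0, hi0⟩ := hall
    obtain ⟨htop, hlow⟩ := top_high anti hf i0 (not_lt.mpr hi0)
    have hchain : IncChain (M.filter (fun s => s.1 < x)) (k - 1)
        (fun i : Fin (k-1) => f ⟨i, by omega⟩) := by
      constructor
      · intro i
        refine mem_filter.2 ⟨hf.1 _, hlow _ ?_⟩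
        intro hc
        have : (i : ℕ) = (i0 : ℕ) := congrArg Fin.val hc
        have := i.isLt; omega
      · intro i j hij
        exact hf.2 _ _ hij
    have := hchain.le_maxIncSeq
    have hk1 : 1 ≤ k := by have := i0.isLt; omega
    omega

/-- Extraction: if the LIS of `M` exceeds that of its low part `A`, a maximal
chain ends with a high element `d`, whose strictly-lower part of `A` already
achieves the LIS of `A`. -/
lemma maxIncSeq_extract {M : Finset Square} {x : ℕ}
    (anti : ∀ s ∈ M, ∀ t ∈ M, x ≤ s.1 → x ≤ t.1 → s.1 < t.1 → ¬ s.2 < t.2)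
    (h : maxIncSeq (M.filter (fun s => s.1 < x)) + 1 ≤ maxIncSeq M) :
    ∃ d ∈ M, x ≤ d.1 ∧ maxIncSeq (M.filter (fun s => s.1 < x)) ≤
      maxIncSeq ((M.filter (fun s => s.1 < x)).filter (fun s => s.2 < d.2)) := by
  set k := maxIncSeq M with hk
  set A := M.filter (fun s => s.1 < x) with hA
  obtain ⟨f, hf⟩ := maxIncSeq_spec M
  by_cases hall : ∀ i, (f i).1 < x
  · exfalso
    have : k ≤ maxIncSeq A := hf.le_maxIncSeq_of_mem fun i => mem_filter.2 ⟨hf.1 i, hall i⟩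
    omega
  push_neg at hall
  obtain ⟨i0, hi0⟩ := hall
  obtain ⟨htop, hlow⟩ := top_high anti hf i0 (not_lt.mpr hi0)
  refine ⟨f i0, hf.1 i0, by omega, ?_⟩
  have hchain : IncChain (A.filter (fun s => s.2 < (f i0).2)) (k - 1)
      (fun i : Fin (k-1) => f ⟨i, by omega⟩) := by
    constructor
    · intro i
      have hne : (⟨(i : ℕ), by omega⟩ : Fin k) ≠ i0 := by
        intro hc
        have : (i : ℕ) = (i0 : ℕ) := congrArg Fin.val hc
        have := i.isLt; omega
      have hlt : (⟨(i : ℕ), by omega⟩ : Fin k) < i0 := by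
        have := i.isLt
        simp only [Fin.lt_def]
        omega
      refine mem_filter.2 ⟨mem_filter.2 ⟨hf.1 _, hlow _ hne⟩, (hf.2 _ i0 hlt).2⟩
    · intro i j hij
      exact hf.2 _ _ hij
  have := hchain.le_maxIncSeq
  have hk1 : 1 ≤ k := by have := i0.isLt; omega
  omega

end BS312Aux
section BS312Board

open Finset

lemma nat_initseg {s : Finset ℕ} (h : ∀ a ∈ s, ∀ b ≤ a, b ∈ s) {k : ℕ} :
    k ∈ s ↔ k < s.card := by
  constructor
  · intro hk
    have hsub : Finset.range (k+1) ⊆ s := by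
      intro b hb
      exact h k hk b (by simpa [Nat.lt_succ_iff] using hb)
    calc k < (Finset.range (k+1)).card := by simp
      _ ≤ s.card := Finset.card_le_card hsub
  · intro hk
    by_contra hk'
    have hsub : s ⊆ Finset.range k := by
      intro a ha
      rw [Finset.mem_range]
      by_contra hak
      exact hk' (h a ha k (by omega))
    have := Finset.card_le_card hsub
    simp at this
    omega

namespace FerrersBoard

variable {n : ℕ} (F : FerrersBoard n)

lemma mem_iff_lt_colHeight {c r : ℕ} :
    (c, r) ∈ F.squares ↔ r < F.colHeight c := by
  classical
  set sc := (F.squares.filter (fun s => s.1 = c)).image Prod.snd with hsc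
  have hcard : sc.card = F.colHeight c := by
    rw [hsc, FerrersBoard.colHeight]
    apply Finset.card_image_of_injOn
    intro s hs t ht hst
    simp only [Finset.coe_filter, Set.mem_setOf_eq] at hs ht
    obtain ⟨s1, s2⟩ := s; obtain ⟨t1, t2⟩ := t
    simp only at hst hs ht
    rw [hs.2, ht.2, hst]
  have hmem : ∀ ρ, (c, ρ) ∈ F.squares ↔ ρ ∈ sc := by
    intro ρ
    simp only [hsc, Finset.mem_image, Finset.mem_filter]
    constructor
    · intro hρ; exact ⟨(c, ρ), ⟨hρ, rfl⟩, rfl⟩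
    · rintro ⟨⟨s1, s2⟩, ⟨hsF, hs1⟩, hs2⟩
      simp only at hs1 hs2
      rw [← hs1, ← hs2]; exact hsF
  have hdc : ∀ a ∈ sc, ∀ b ≤ a, b ∈ sc := by
    intro a ha b hb
    rw [← hmem] at ha ⊢
    exact F.closed _ ha (c, b) le_rfl hb
  rw [hmem, nat_initseg hdc, hcard]

lemma mem_iff_lt_rowWidth {c r : ℕ} :
    (c, r) ∈ F.squares ↔ c < F.rowWidth r := by
  classical
  set sc := (F.squares.filter (fun s => s.2 = r)).image Prod.fst with hsc
  have hcard : sc.card = F.rowWidth r := by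
    rw [hsc, FerrersBoard.rowWidth]
    apply Finset.card_image_of_injOn
    intro s hs t ht hst
    simp only [Finset.coe_filter, Set.mem_setOf_eq] at hs ht
    obtain ⟨s1, s2⟩ := s; obtain ⟨t1, t2⟩ := t
    simp only at hst hs ht
    rw [hs.2, ht.2, hst]
  have hmem : ∀ a, (a, r) ∈ F.squares ↔ a ∈ sc := by
    intro a
    simp only [hsc, Finset.mem_image, Finset.mem_filter]
    constructor
    · intro hρ; exact ⟨(a, r), ⟨hρ, rfl⟩, rfl⟩
    · rintro ⟨⟨s1, s2⟩, ⟨hsF, hs1⟩, hs2⟩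
      simp only at hs1 hs2
      rw [← hs1, ← hs2]; exact hsF
  have hdc : ∀ a ∈ sc, ∀ b ≤ a, b ∈ sc := by
    intro a ha b hb
    rw [← hmem] at ha ⊢
    exact F.closed _ ha (b, r) hb le_rfl
  rw [hmem, nat_initseg hdc, hcard]

lemma colHeight_anti {c c' : ℕ} (h : c ≤ c') : F.colHeight c' ≤ F.colHeight c := by
  by_contra hcon
  push_neg at hcon
  have h1 : (c', F.colHeight c) ∈ F.squares := (F.mem_iff_lt_colHeight).2 hcon
  have h2 : (c, F.colHeight c) ∈ F.squares := F.closed _ h1 _ h le_rfl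
  have := (F.mem_iff_lt_colHeight).1 h2
  omega

lemma rowWidth_anti {r r' : ℕ} (h : r ≤ r') : F.rowWidth r' ≤ F.rowWidth r := by
  by_contra hcon
  push_neg at hcon
  have h1 : (F.rowWidth r, r') ∈ F.squares := (F.mem_iff_lt_rowWidth).2 hcon
  have h2 : (F.rowWidth r, r) ∈ F.squares := F.closed _ h1 _ le_rfl h
  have := (F.mem_iff_lt_rowWidth).1 h2
  omega

/-- The border vertex at the top-right of a nonempty column. -/
lemma border_col_top {c r : ℕ} (h : (c, r) ∈ F.squares) :
    F.IsBorderVertex (c + 1, F.colHeight c) := by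
  refine ⟨?_, ?_, ?_⟩
  · show c + 1 ≤ F.width
    have : (c, 0) ∈ F.squares := F.closed _ h _ le_rfl (Nat.zero_le _)
    have := (F.mem_iff_lt_rowWidth).1 this
    exact this
  · exact F.colHeight_anti (Nat.le_succ c)
  · simp

/-- The border vertex at the right end of a nonempty row. -/
lemma border_row_right {r : ℕ} (h : (0, r) ∈ F.squares) :
    F.IsBorderVertex (F.rowWidth r, r) := by
  have hW : 1 ≤ F.rowWidth r := by
    have := (F.mem_iff_lt_rowWidth).1 h; omega
  refine ⟨?_, ?_, ?_⟩
  · show F.rowWidth r ≤ F.width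
    exact F.rowWidth_anti (Nat.zero_le r)
  · show F.colHeight (F.rowWidth r) ≤ r
    by_contra hcon
    push_neg at hcon
    have := (F.mem_iff_lt_colHeight (c := F.rowWidth r) (r := r)).2 hcon
    have := (F.mem_iff_lt_rowWidth).1 this
    omega
  · show r ≤ F.colHeight (F.rowWidth r - 1)
    have hmem : (F.rowWidth r - 1, r) ∈ F.squares := by
      rw [F.mem_iff_lt_rowWidth]; omega
    have := (F.mem_iff_lt_colHeight).1 hmem
    omega

/-- Top border vertices `(a, height)` for `a ≤ rowWidth (height - 1)`. -/
lemma border_top {a : ℕ} (hh : 1 ≤ F.height) (ha : a ≤ F.rowWidth (F.height - 1)) :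
    F.IsBorderVertex (a, F.height) := by
  refine ⟨?_, ?_, ?_⟩
  · show a ≤ F.width
    exact le_trans ha (F.rowWidth_anti (Nat.zero_le _))
  · exact F.colHeight_anti (Nat.zero_le a)
  · show F.height ≤ F.colHeight (a - 1)
    rcases Nat.eq_zero_or_pos a with h0 | h0
    · subst h0; exact le_refl _
    · have hmem : (a - 1, F.height - 1) ∈ F.squares := by
        rw [F.mem_iff_lt_rowWidth]; omega
      have := (F.mem_iff_lt_colHeight).1 hmem
      omega

end FerrersBoard

end BS312Board
section BS312Place

open Finset

variable {n : ℕ} {F : FerrersBoard n} {P Q : Finset Square}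

lemma mem_RV {s : Square} {a b : ℕ} : s ∈ RV (a, b) ↔ s.1 < a ∧ s.2 < b := by
  simp [RV, Finset.mem_product]

lemma mem_PRV {s : Square} {a b : ℕ} :
    s ∈ P ∩ RV (a, b) ↔ s ∈ P ∧ s.1 < a ∧ s.2 < b := by
  simp [Finset.mem_inter, mem_RV]

lemma exists_row_marker (hP : IsFullPlacement F P) {r : ℕ} (hr : r < F.height) :
    ∃ c, (c, r) ∈ P := by
  have hmem : (0, r) ∈ F.squares := by
    rw [F.mem_iff_lt_colHeight]; exact hr
  exact (hP.2 (0, r) hmem).2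

lemma exists_col_marker (hP : IsFullPlacement F P) {c : ℕ} (hc : c < F.width) :
    ∃ ρ, (c, ρ) ∈ P := by
  have hmem : (c, 0) ∈ F.squares := by
    rw [F.mem_iff_lt_rowWidth]; exact hc
  exact (hP.2 (c, 0) hmem).1

/-- The basic use of 312-avoidance: a marker `(x, r)`, followed by two markers
below row `r` forming an ascent, with everything inside the board, is forbidden. -/
lemma no312 (hav : AvoidsOn F P perm312) (hsub : P ⊆ F.squares)
    {x r c1 ρ1 c2 ρ2 : ℕ}
    (hm : (x, r) ∈ P) (h1 : (c1, ρ1) ∈ P) (h2 : (c2, ρ2) ∈ P)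
    (hx1 : x < c1) (h12 : c1 < c2) (hρ : ρ1 < ρ2) (hρr : ρ2 < r)
    (hF : (c2, r) ∈ F.squares) : False := by
  have hV : F.IsBorderVertex (c2 + 1, F.colHeight c2) := F.border_col_top hF
  have hrh : r < F.colHeight c2 := (F.mem_iff_lt_colHeight).1 hF
  apply hav _ hV
  refine ⟨![(x, r), (c1, ρ1), (c2, ρ2)], ?_, ?_, ?_⟩
  · intro i
    fin_cases i
    · show (x, r) ∈ P ∩ RV (c2 + 1, F.colHeight c2)
      exact mem_PRV.2 ⟨hm, by omega, by omega⟩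
    · show (c1, ρ1) ∈ P ∩ RV (c2 + 1, F.colHeight c2)
      exact mem_PRV.2 ⟨h1, by omega, by omega⟩
    · show (c2, ρ2) ∈ P ∩ RV (c2 + 1, F.colHeight c2)
      exact mem_PRV.2 ⟨h2, by omega, by omega⟩
  · intro i j hij
    fin_cases i <;> fin_cases j <;> simp_all <;> omega
  · intro i j
    fin_cases i <;> fin_cases j <;>
      simp [perm312, Fin.lt_def] <;> omega

end BS312Place
section BS312Struct

open Finset

variable {n : ℕ} {F : FerrersBoard n} {P : Finset Square}

/-- The part of `P ∩ R(a,b)` left of the column of the row-`r` marker `(x,r)`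
is exactly `P ∩ R(x,r)`, for `b ∈ {r, r+1}`. -/
lemma low_eq (hrow : ∀ s ∈ P, ∀ t ∈ P, s.2 = t.2 → s = t)
    {x r a b : ℕ} (hm : (x, r) ∈ P) (hxa : x ≤ a) (hb1 : r ≤ b) (hb2 : b ≤ r + 1) :
    (P ∩ RV (a, b)).filter (fun s => s.1 < x) = P ∩ RV (x, r) := by
  ext s
  simp only [Finset.mem_filter, mem_PRV]
  constructor
  · rintro ⟨⟨hsP, hsa, hsb⟩, hsx⟩
    refine ⟨hsP, hsx, ?_⟩
    have : s.2 ≠ r := by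
      intro h
      have := hrow s hsP (x, r) hm (by simpa using h)
      rw [this] at hsx
      simp at hsx
    omega
  · rintro ⟨hsP, hsx, hsr⟩
    exact ⟨⟨hsP, by omega, by omega⟩, hsx⟩

/-- Left of the row-`r` marker there is nothing in row `r`. -/
lemma high_empty_eq (hrow : ∀ s ∈ P, ∀ t ∈ P, s.2 = t.2 → s = t)
    {x r a : ℕ} (hm : (x, r) ∈ P) (hax : a ≤ x) :
    P ∩ RV (a, r + 1) = P ∩ RV (a, r) := by
  ext s
  simp only [mem_PRV]
  constructor
  · rintro ⟨hsP, hsa, hsb⟩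
    refine ⟨hsP, hsa, ?_⟩
    have : s.2 ≠ r := by
      intro h
      have := hrow s hsP (x, r) hm (by simpa using h)
      rw [this] at hsa
      simp at hsa
      omega
    omega
  · rintro ⟨hsP, hsa, hsb⟩
    exact ⟨hsP, hsa, by omega⟩

/-- 312-avoidance: in `P ∩ R(a, r+1)` with `a ≤ rowWidth r`, the markers at or
right of column `x` (the column of the row-`r` marker) are pairwise
non-increasing. -/
lemma antiP (hav : AvoidsOn F P perm312) (hP : IsRookPlacement F P)
    {x r a : ℕ} (hm : (x, r) ∈ P) (haW : a ≤ F.rowWidth r) :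
    ∀ s ∈ P ∩ RV (a, r + 1), ∀ t ∈ P ∩ RV (a, r + 1),
      x ≤ s.1 → x ≤ t.1 → s.1 < t.1 → ¬ s.2 < t.2 := by
  intro s hs t ht hxs hxt hst hlt
  obtain ⟨hsP, hsa, hsr⟩ := mem_PRV.1 hs
  obtain ⟨htP, hta, htr⟩ := mem_PRV.1 ht
  have htne : t.2 ≠ r := by
    intro h
    have := hP.2.2 t htP (x, r) hm (by simpa using h)
    rw [this] at hst
    simp at hst
    omega
  have hsne : s.1 ≠ x := by
    intro h
    have := hP.2.1 s hsP (x, r) hm (by simpa using h)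
    have : s.2 = r := by rw [this]
    omega
  have hF : (t.1, r) ∈ F.squares := by
    rw [F.mem_iff_lt_rowWidth]; omega
  exact no312 hav hP.1 hm (by simpa using hsP) (by simpa using htP)
    (by omega) hst hlt (by omega) hF

lemma SP_high (hav : AvoidsOn F P perm312) (hP : IsRookPlacement F P)
    {x r a : ℕ} (hm : (x, r) ∈ P) (hxa : x < a) (haW : a ≤ F.rowWidth r) :
    maxIncSeq (P ∩ RV (a, r + 1)) = maxIncSeq (P ∩ RV (x, r)) + 1 := by
  have hup := maxIncSeq_le_low_succ (M := P ∩ RV (a, r + 1)) (x := x)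
    (antiP hav hP hm haW)
  rw [low_eq hP.2.2 hm (by omega) (by omega) (by omega)] at hup
  have hlo : maxIncSeq (P ∩ RV (x, r)) + 1 ≤ maxIncSeq (P ∩ RV (a, r + 1)) := by
    apply append_dom (m := (x, r))
    · exact mem_PRV.2 ⟨hm, hxa, by omega⟩
    · intro s hs
      obtain ⟨h1, h2, h3⟩ := mem_PRV.1 hs
      exact mem_PRV.2 ⟨h1, by omega, by omega⟩
    · intro s hs
      obtain ⟨h1, h2, h3⟩ := mem_PRV.1 hs
      exact ⟨h2, h3⟩
  omega

lemma antiP' (hav : AvoidsOn F P perm312) (hP : IsRookPlacement F P)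
    {x r a : ℕ} (hm : (x, r) ∈ P) (haW : a ≤ F.rowWidth r) :
    ∀ s ∈ P ∩ RV (a, r), ∀ t ∈ P ∩ RV (a, r),
      x ≤ s.1 → x ≤ t.1 → s.1 < t.1 → ¬ s.2 < t.2 := by
  intro s hs t ht
  have hs' : s ∈ P ∩ RV (a, r + 1) := by
    obtain ⟨h1, h2, h3⟩ := mem_PRV.1 hs
    exact mem_PRV.2 ⟨h1, h2, by omega⟩
  have ht' : t ∈ P ∩ RV (a, r + 1) := by
    obtain ⟨h1, h2, h3⟩ := mem_PRV.1 ht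
    exact mem_PRV.2 ⟨h1, h2, by omega⟩
  exact antiP hav hP hm haW s hs' t ht'

lemma SP_low_bounds (hav : AvoidsOn F P perm312) (hP : IsRookPlacement F P)
    {x r a : ℕ} (hm : (x, r) ∈ P) (hxa : x < a) (haW : a ≤ F.rowWidth r) :
    maxIncSeq (P ∩ RV (x, r)) ≤ maxIncSeq (P ∩ RV (a, r)) ∧
      maxIncSeq (P ∩ RV (a, r)) ≤ maxIncSeq (P ∩ RV (x, r)) + 1 := by
  constructor
  · apply maxIncSeq_mono
    intro s hs
    obtain ⟨h1, h2, h3⟩ := mem_PRV.1 hs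
    exact mem_PRV.2 ⟨h1, by omega, h3⟩
  · have hup := maxIncSeq_le_low_succ (M := P ∩ RV (a, r)) (x := x)
      (antiP' hav hP hm haW)
    rw [low_eq hP.2.2 hm (by omega) (by omega) (by omega)] at hup
    exact hup

/-- Forward: if the LIS jumps at `(a, r)`, there is a qualifying marker. -/
lemma qual_of_eq (hav : AvoidsOn F P perm312) (hP : IsRookPlacement F P)
    {x r a : ℕ} (hm : (x, r) ∈ P) (hxa : x < a) (haW : a ≤ F.rowWidth r)
    (heq : maxIncSeq (P ∩ RV (a, r)) = maxIncSeq (P ∩ RV (x, r)) + 1) :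
    ∃ d ∈ P, x < d.1 ∧ d.1 < a ∧ d.2 < r ∧
      maxIncSeq (P ∩ RV (x, r)) ≤
        maxIncSeq ((P ∩ RV (x, r)).filter (fun s => s.2 < d.2)) := by
  have hlow := low_eq (a := a) (b := r) hP.2.2 hm (by omega) (by omega) (by omega)
  obtain ⟨d, hdM, hdx, hdq⟩ := maxIncSeq_extract (M := P ∩ RV (a, r)) (x := x)
    (antiP' hav hP hm haW) (by rw [hlow]; omega)
  rw [hlow] at hdq
  obtain ⟨hdP, hda, hdr⟩ := mem_PRV.1 hdM
  have hdne : d.1 ≠ x := by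
    intro h
    have := hP.2.1 d hdP (x, r) hm (by simpa using h)
    have : d.2 = r := by rw [this]
    omega
  exact ⟨d, hdP, by omega, hda, hdr, hdq⟩

/-- Backward: a qualifying marker forces the LIS to jump at `(a, r)`. -/
lemma eq_of_qual (hav : AvoidsOn F P perm312) (hP : IsRookPlacement F P)
    {x r a : ℕ} (hm : (x, r) ∈ P) (hxa : x < a) (haW : a ≤ F.rowWidth r)
    {d : Square} (hd : d ∈ P) (hdx : x < d.1) (hda : d.1 < a) (hdr : d.2 < r)
    (hq : maxIncSeq (P ∩ RV (x, r)) ≤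
      maxIncSeq ((P ∩ RV (x, r)).filter (fun s => s.2 < d.2))) :
    maxIncSeq (P ∩ RV (a, r)) = maxIncSeq (P ∩ RV (x, r)) + 1 := by
  have hub := (SP_low_bounds hav hP hm hxa haW).2
  have hlo : maxIncSeq ((P ∩ RV (x, r)).filter (fun s => s.2 < d.2)) + 1 ≤
      maxIncSeq (P ∩ RV (a, r)) := by
    apply append_dom (m := d)
    · exact mem_PRV.2 ⟨hd, hda, hdr⟩
    · intro s hs
      obtain ⟨hs1, hs2⟩ := Finset.mem_filter.1 hs
      obtain ⟨h1, h2, h3⟩ := mem_PRV.1 hs1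
      exact mem_PRV.2 ⟨h1, by omega, by omega⟩
    · intro s hs
      obtain ⟨hs1, hs2⟩ := Finset.mem_filter.1 hs
      obtain ⟨h1, h2, h3⟩ := mem_PRV.1 hs1
      exact ⟨by omega, hs2⟩
  omega

end BS312Struct
section BS312Main

open Finset

variable {n : ℕ} {F : FerrersBoard n} {P Q : Finset Square}

/-- Transfer of the "jump" of the `S`-value at `(a, r)` from `P` to `Q`. -/
lemma transfer312
    (hP : IsFullPlacement F P) (hQ : IsFullPlacement F Q)
    (hPav : AvoidsOn F P perm312) (hQav : AvoidsOn F Q perm312)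
    {x r a : ℕ} (hmP : (x, r) ∈ P) (hmQ : (x, r) ∈ Q)
    (hQP : ∀ s ∈ Q, r + 1 ≤ s.2 → s ∈ P)
    (hW : maxIncSeq (P ∩ RV (F.rowWidth r, r)) = maxIncSeq (Q ∩ RV (F.rowWidth r, r)))
    (hxa : x < a) (haW : a < F.rowWidth r)
    (hα : maxIncSeq (P ∩ RV (x, r)) = maxIncSeq (Q ∩ RV (x, r)))
    (hPa : maxIncSeq (P ∩ RV (a, r)) = maxIncSeq (P ∩ RV (x, r)) + 1) :
    maxIncSeq (Q ∩ RV (a, r)) = maxIncSeq (Q ∩ RV (x, r)) + 1 := by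
  obtain ⟨d, hdP, hdx, hda, hdr, hdq⟩ := qual_of_eq hPav hP.1 hmP hxa (le_of_lt haW) hPa
  have hPW : maxIncSeq (P ∩ RV (F.rowWidth r, r)) = maxIncSeq (P ∩ RV (x, r)) + 1 :=
    eq_of_qual hPav hP.1 hmP (by omega) le_rfl hdP hdx (by omega) hdr hdq
  have hQW : maxIncSeq (Q ∩ RV (F.rowWidth r, r)) = maxIncSeq (Q ∩ RV (x, r)) + 1 := by
    omega
  obtain ⟨e, heQ, hex, heW, her, heq⟩ := qual_of_eq hQav hQ.1 hmQ (by omega) le_rfl hQW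
  have hcw : d.1 < F.width := by
    have h1 : F.width = F.rowWidth 0 := rfl
    have h2 : F.rowWidth r ≤ F.rowWidth 0 := F.rowWidth_anti (Nat.zero_le r)
    omega
  obtain ⟨ρ', he'⟩ := exists_col_marker hQ hcw
  have hρ'ne : ρ' ≠ r := by
    intro h
    subst h
    have := hQ.1.2.2 (d.1, ρ') he' (x, ρ') hmQ rfl
    have : d.1 = x := congrArg Prod.fst this
    omega
  have hρ'lt : ρ' < r := by
    by_contra hge
    push_neg at hge
    have hshared : (d.1, ρ') ∈ P := hQP _ he' (by omega)
    have := hP.1.2.1 (d.1, ρ') hshared d hdP rfl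
    have : ρ' = d.2 := congrArg Prod.snd this
    omega
  rcases le_or_gt e.2 ρ' with hcase | hcase
  · refine eq_of_qual hQav hQ.1 hmQ hxa (le_of_lt haW) he' hdx hda hρ'lt ?_
    refine le_trans heq (maxIncSeq_mono ?_)
    intro t ht
    obtain ⟨ht1, ht2⟩ := Finset.mem_filter.1 ht
    exact Finset.mem_filter.2 ⟨ht1, by omega⟩
  · have hce : e.1 ≠ d.1 := by
      intro h
      have := hQ.1.2.1 e heQ (d.1, ρ') he' (by simpa using h)
      have : e.2 = ρ' := congrArg Prod.snd this
      omega
    have helt : e.1 < d.1 := by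
      by_contra hge
      push_neg at hge
      have hF : (e.1, r) ∈ F.squares := by rw [F.mem_iff_lt_rowWidth]; omega
      exact no312 hQav hQ.1.1 hmQ he' (by simpa using heQ) hdx (by omega) hcase her hF
    exact eq_of_qual hQav hQ.1 hmQ hxa (le_of_lt haW) heQ hex (by omega) her heq

/-- The row-`r` marker of `P` cannot be strictly left of that of `Q`. -/
lemma marker_lt_absurd
    (hP : IsFullPlacement F P) (hQ : IsFullPlacement F Q)
    (hPav : AvoidsOn F P perm312) (hQav : AvoidsOn F Q perm312)
    {x y r : ℕ} (hmP : (x, r) ∈ P) (hmQ : (y, r) ∈ Q) (hxy : x < y)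
    (hseg : ∀ a ≤ F.rowWidth r,
      maxIncSeq (P ∩ RV (a, r + 1)) = maxIncSeq (Q ∩ RV (a, r + 1))) : False := by
  have hyW : y < F.rowWidth r := (F.mem_iff_lt_rowWidth).1 (hQ.1.1 hmQ)
  have e1 := SP_high hPav hP.1 hmP hxy (le_of_lt hyW)
  have e2 := SP_high hPav hP.1 hmP (show x < y + 1 by omega) (by omega)
  have e3 := high_empty_eq hQ.1.2.2 hmQ (le_refl y)
  have e4 := SP_high hQav hQ.1 hmQ (show y < y + 1 by omega) (by omega)
  have h1 := hseg y (by omega)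
  have h2 := hseg (y + 1) (by omega)
  rw [e1, e3] at h1
  rw [e2, e4] at h2
  omega

/-- The invariant for the downward induction on rows. -/
def Inv312 {n : ℕ} (F : FerrersBoard n) (P Q : Finset Square) (r : ℕ) : Prop :=
  (∀ s ∈ P, r ≤ s.2 → s ∈ Q) ∧ (∀ s ∈ Q, r ≤ s.2 → s ∈ P) ∧
  ∀ a ≤ F.rowWidth (r - 1), maxIncSeq (P ∩ RV (a, r)) = maxIncSeq (Q ∩ RV (a, r))

lemma base312
    (hP : IsFullPlacement F P) (hQ : IsFullPlacement F Q)
    (hS : ∀ V : ℕ × ℕ, F.IsBorderVertex V → SPV P V = SPV Q V) :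
    Inv312 F P Q F.height := by
  have hh : F.height = F.colHeight 0 := rfl
  refine ⟨?_, ?_, ?_⟩
  · intro s hs hrs
    exfalso
    have hsF : (s.1, s.2) ∈ F.squares := by simpa using hP.1.1 hs
    have h1 := (F.mem_iff_lt_colHeight).1 hsF
    have h2 := F.colHeight_anti (Nat.zero_le s.1)
    omega
  · intro s hs hrs
    exfalso
    have hsF : (s.1, s.2) ∈ F.squares := by simpa using hQ.1.1 hs
    have h1 := (F.mem_iff_lt_colHeight).1 hsF
    have h2 := F.colHeight_anti (Nat.zero_le s.1)
    omega
  · intro a ha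
    rcases Nat.eq_zero_or_pos F.height with h0 | h0
    · have e1 : P ∩ RV (a, F.height) = ∅ := by
        ext s
        simp only [mem_PRV, Finset.notMem_empty, iff_false]
        rintro ⟨_, _, h⟩; omega
      have e2 : Q ∩ RV (a, F.height) = ∅ := by
        ext s
        simp only [mem_PRV, Finset.notMem_empty, iff_false]
        rintro ⟨_, _, h⟩; omega
      rw [e1, e2]
    · have hbv := F.border_top h0 ha
      simpa [SPV] using hS _ hbv

lemma step312
    (hP : IsFullPlacement F P) (hQ : IsFullPlacement F Q)
    (hPav : AvoidsOn F P perm312) (hQav : AvoidsOn F Q perm312)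
    (hS : ∀ V : ℕ × ℕ, F.IsBorderVertex V → SPV P V = SPV Q V)
    {r : ℕ} (hr : r < F.height) (ih : Inv312 F P Q (r + 1)) :
    Inv312 F P Q r := by
  have hseg : ∀ a ≤ F.rowWidth r,
      maxIncSeq (P ∩ RV (a, r + 1)) = maxIncSeq (Q ∩ RV (a, r + 1)) := by
    have := ih.2.2
    simpa using this
  obtain ⟨x, hmP⟩ := exists_row_marker hP hr
  obtain ⟨y, hmQ⟩ := exists_row_marker hQ hr
  have hxy : x = y := by
    rcases lt_trichotomy x y with h | h | h
    · exact absurd (marker_lt_absurd hP hQ hPav hQav hmP hmQ h hseg) (fun h => h)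
    · exact h
    · exact absurd (marker_lt_absurd hQ hP hQav hPav hmQ hmP h
        (fun a ha => (hseg a ha).symm)) (fun h => h)
  subst hxy
  have hxW : x < F.rowWidth r := (F.mem_iff_lt_rowWidth).1 (hP.1.1 hmP)
  refine ⟨?_, ?_, ?_⟩
  · intro s hs hrs
    rcases Nat.lt_or_ge s.2 (r + 1) with h | h
    · have hs2 : s.2 = r := by omega
      have : s = (x, r) := hP.1.2.2 s hs (x, r) hmP (by simpa using hs2)
      rw [this]; exact hmQ
    · exact ih.1 s hs h
  · intro s hs hrs
    rcases Nat.lt_or_ge s.2 (r + 1) with h | h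
    · have hs2 : s.2 = r := by omega
      have : s = (x, r) := hQ.1.2.2 s hs (x, r) hmQ (by simpa using hs2)
      rw [this]; exact hmP
    · exact ih.2.1 s hs h
  · intro a ha
    rcases le_or_gt a x with hax | hxa
    · rw [← high_empty_eq hP.1.2.2 hmP hax, ← high_empty_eq hQ.1.2.2 hmQ hax]
      exact hseg a (by omega)
    · rcases lt_or_ge a (F.rowWidth r) with haW | haW
      · -- main case
        have f1 := SP_high hPav hP.1 hmP hxa (le_of_lt haW)
        have f2 := SP_high hQav hQ.1 hmQ hxa (le_of_lt haW)
        have f3 := hseg a (by omega)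
        have hα : maxIncSeq (P ∩ RV (x, r)) = maxIncSeq (Q ∩ RV (x, r)) := by omega
        have h0r : (0, r) ∈ F.squares := by
          rw [F.mem_iff_lt_colHeight]
          exact hr
        have hW : maxIncSeq (P ∩ RV (F.rowWidth r, r)) =
            maxIncSeq (Q ∩ RV (F.rowWidth r, r)) := by
          simpa [SPV] using hS _ (F.border_row_right h0r)
        have bP := SP_low_bounds hPav hP.1 hmP hxa (le_of_lt haW)
        have bQ := SP_low_bounds hQav hQ.1 hmQ hxa (le_of_lt haW)
        by_cases hjP : maxIncSeq (P ∩ RV (a, r)) = maxIncSeq (P ∩ RV (x, r)) + 1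
        · have := transfer312 hP hQ hPav hQav hmP hmQ ih.2.1 hW hxa haW hα hjP
          omega
        · by_cases hjQ : maxIncSeq (Q ∩ RV (a, r)) = maxIncSeq (Q ∩ RV (x, r)) + 1
          · have := transfer312 hQ hP hQav hPav hmQ hmP ih.1 hW.symm hxa haW hα.symm hjQ
            omega
          · omega
      · -- (a, r) is a border vertex
        have hbv : F.IsBorderVertex (a, r) := by
          have hw : F.width = F.rowWidth 0 := rfl
          have h2 : F.rowWidth (r - 1) ≤ F.rowWidth 0 := F.rowWidth_anti (Nat.zero_le _)
          refine ⟨by show a ≤ F.width; omega, ?_, ?_⟩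
          · show F.colHeight a ≤ r
            by_contra hcon
            push_neg at hcon
            have : (a, r) ∈ F.squares := (F.mem_iff_lt_colHeight).2 hcon
            have := (F.mem_iff_lt_rowWidth).1 this
            omega
          · show r ≤ F.colHeight (a - 1)
            have ha1 : (a - 1, r - 1) ∈ F.squares := by
              rw [F.mem_iff_lt_rowWidth]; omega
            have := (F.mem_iff_lt_colHeight).1 ha1
            omega
        simpa [SPV] using hS _ hbv

end BS312Main
/-- Theorem 1, 312 case.  If `P` and `Q` are 312-avoiding full
rook placements on a Ferrers board `F` with `S(P,F) = S(Q,F)` (i.e. the values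
`S(P,V)` and `S(Q,V)` agree at every vertex `V` of the right/up border of `F`),
then `P = Q`. -/
theorem seq_injective_on_312 {n : ℕ} (F : FerrersBoard n) (P Q : Finset Square)
    (hP : IsFullPlacement F P) (hQ : IsFullPlacement F Q)
    (hPavoid : AvoidsOn F P perm312) (hQavoid : AvoidsOn F Q perm312)
    (hS : ∀ V : ℕ × ℕ, F.IsBorderVertex V → SPV P V = SPV Q V) :
    P = Q := by
  have main : ∀ k, Inv312 F P Q (F.height - k) := by
    intro k
    induction k with
    | zero => simpa using base312 hP hQ hS
    | succ k ih =>
      rcases Nat.eq_zero_or_pos (F.height - k) with h0 | h0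
      · have he : F.height - (k + 1) = F.height - k := by omega
        rw [he]; exact ih
      · have h1 : F.height - (k + 1) < F.height := by omega
        have h2 : F.height - (k + 1) + 1 = F.height - k := by omega
        exact step312 hP hQ hPavoid hQavoid hS h1 (by rw [h2]; exact ih)
  have h0 := main F.height
  rw [Nat.sub_self] at h0
  exact Finset.Subset.antisymm (fun s hs => h0.1 s hs (Nat.zero_le _))
    (fun s hs => h0.2.1 s hs (Nat.zero_le _))
end

section
/- For any Ferrers board F and any vertex V on its right/up border, there exists an integer N(F,V) such that for every full rook placement P on F, the number of markers of P lying in R(V) is exactly N(F,V); that is, any two full rook placements on F have the same number of markers in R(V). -/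
lemma mem_col_iff {n : ℕ} (F : FerrersBoard n) (c r : ℕ) :
    (c, r) ∈ F.squares ↔ r < F.colHeight c := by
  constructor
  · intro h
    have hsub : (Finset.range (r + 1)).image (fun i => ((c, i) : Square)) ⊆
        F.squares.filter (fun s => s.1 = c) := by
      intro s hs
      simp only [Finset.mem_image, Finset.mem_range] at hs
      obtain ⟨i, hi, rfl⟩ := hs
      simp only [Finset.mem_filter]
      exact ⟨F.closed _ h _ le_rfl (Nat.lt_succ_iff.mp hi), trivial⟩
    have hc := Finset.card_le_card hsub
    rw [Finset.card_image_of_injective _ (fun x y hxy => by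
      simpa using (Prod.mk.injEq c x c y).mp hxy)] at hc
    simp only [Finset.card_range] at hc
    exact Nat.lt_of_succ_le hc
  · intro h
    by_contra hc
    have hsub : F.squares.filter (fun s => s.1 = c) ⊆
        (Finset.range r).image (fun i => ((c, i) : Square)) := by
      intro s hs
      simp only [Finset.mem_filter] at hs
      simp only [Finset.mem_image, Finset.mem_range]
      refine ⟨s.2, ?_, by rw [← hs.2]⟩
      by_contra hr
      exact hc (F.closed s hs.1 (c, r) (le_of_eq hs.2.symm) (le_of_not_gt hr))
    have h2 := (Finset.card_le_card hsub).trans Finset.card_image_le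
    simp only [Finset.card_range] at h2
    exact absurd h (not_lt_of_ge (le_trans (le_of_eq rfl) h2))

lemma mem_row_iff {n : ℕ} (F : FerrersBoard n) (c r : ℕ) :
    (c, r) ∈ F.squares ↔ c < F.rowWidth r := by
  constructor
  · intro h
    have hsub : (Finset.range (c + 1)).image (fun i => ((i, r) : Square)) ⊆
        F.squares.filter (fun s => s.2 = r) := by
      intro s hs
      simp only [Finset.mem_image, Finset.mem_range] at hs
      obtain ⟨i, hi, rfl⟩ := hs
      simp only [Finset.mem_filter]
      exact ⟨F.closed _ h _ (Nat.lt_succ_iff.mp hi) le_rfl, trivial⟩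
    have hc := Finset.card_le_card hsub
    rw [Finset.card_image_of_injective _ (fun x y hxy => by
      simpa using (Prod.mk.injEq x r y r).mp hxy)] at hc
    simp only [Finset.card_range] at hc
    exact Nat.lt_of_succ_le hc
  · intro h
    by_contra hc
    have hsub : F.squares.filter (fun s => s.2 = r) ⊆
        (Finset.range c).image (fun i => ((i, r) : Square)) := by
      intro s hs
      simp only [Finset.mem_filter] at hs
      simp only [Finset.mem_image, Finset.mem_range]
      refine ⟨s.1, ?_, by rw [← hs.2]⟩
      by_contra hr
      exact hc (F.closed s hs.1 (c, r) (le_of_not_gt hr) (le_of_eq hs.2.symm))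
    have h2 := (Finset.card_le_card hsub).trans Finset.card_image_le
    simp only [Finset.card_range] at h2
    exact absurd h (not_lt_of_ge h2)

/-- Lemma 1.  For any Ferrers board `F` and any vertex `V` on
its right/up border, there is an integer `N = N(F,V)` such that every full rook
placement on `F` has exactly `N` markers in `R(V)`. -/
theorem exists_marker_count {n : ℕ} (F : FerrersBoard n) (V : ℕ × ℕ)
    (hV : F.IsBorderVertex V) :
    ∃ N : ℕ, ∀ P : Finset Square, IsFullPlacement F P → (P ∩ RV V).card = N := by
  obtain ⟨a, b⟩ := V
  obtain ⟨ha, hb1, _⟩ := hV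
  refine ⟨a - (F.height - b), ?_⟩
  intro P hP
  obtain ⟨⟨hPF, hcol, hrow⟩, hfull⟩ := hP
  set A := P.filter (fun s => s.1 < a) with hA
  set B := P.filter (fun s => b ≤ s.2) with hB
  have hcardA : A.card = a := by
    rw [← Finset.card_range a]
    apply Finset.card_bij (fun s _ => s.1)
    · intro s hs
      rw [hA, Finset.mem_filter] at hs
      simpa using hs.2
    · intro s hs t ht h
      rw [hA, Finset.mem_filter] at hs ht
      exact hcol s hs.1 t ht.1 h
    · intro c hc
      rw [Finset.mem_range] at hc
      have hcF : (c, 0) ∈ F.squares := by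
        rw [mem_row_iff]
        exact lt_of_lt_of_le hc ha
      obtain ⟨r, hr⟩ := (hfull _ hcF).1
      exact ⟨(c, r), by rw [hA, Finset.mem_filter]; exact ⟨hr, hc⟩, rfl⟩
  have hcardB : B.card = F.height - b := by
    rw [← Nat.card_Ico b F.height]
    apply Finset.card_bij (fun s _ => s.2)
    · intro s hs
      rw [hB, Finset.mem_filter] at hs
      rw [Finset.mem_Ico]
      refine ⟨hs.2, ?_⟩
      have : (0, s.2) ∈ F.squares :=
        F.closed s (hPF hs.1) _ (Nat.zero_le _) le_rfl
      rw [mem_col_iff] at this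
      exact this
    · intro s hs t ht h
      rw [hB, Finset.mem_filter] at hs ht
      exact hrow s hs.1 t ht.1 h
    · intro r hr
      rw [Finset.mem_Ico] at hr
      have hrF : (0, r) ∈ F.squares := by
        rw [mem_col_iff]; exact hr.2
      obtain ⟨c, hc⟩ := (hfull _ hrF).2
      exact ⟨(c, r), by rw [hB, Finset.mem_filter]; exact ⟨hc, hr.1⟩, rfl⟩
  have hBA : B ⊆ A := by
    intro s hs
    rw [hB, Finset.mem_filter] at hs
    rw [hA, Finset.mem_filter]
    refine ⟨hs.1, ?_⟩
    by_contra hle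
    have : (a, s.2) ∈ F.squares :=
      F.closed s (hPF hs.1) _ (le_of_not_gt hle) le_rfl
    rw [mem_col_iff] at this
    exact absurd (lt_of_lt_of_le this hb1) (not_lt_of_ge hs.2)
  have hset : P ∩ RV (a, b) = A \ B := by
    ext s
    simp only [Finset.mem_inter, RV, Finset.mem_product, Finset.mem_range,
      Finset.mem_sdiff, hA, hB, Finset.mem_filter]
    constructor
    · rintro ⟨hsP, h1, h2⟩
      exact ⟨⟨hsP, h1⟩, fun h => absurd h.2 (not_le_of_gt h2)⟩
    · rintro ⟨⟨hsP, h1⟩, h2⟩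
      exact ⟨hsP, h1, lt_of_not_ge fun h => h2 ⟨hsP, h⟩⟩
  rw [hset, Finset.card_sdiff_of_subset hBA, hcardA, hcardB]
end

section
/- Let F be a Ferrers board and let V1, V2 be F-diagonal vertices. Then N(F,V1) = N(F,V2); that is, every full rook placement on F has the same number of markers in R(V1) as in R(V2). -/
/-!
Write `V1 = (a, c + k)` and `V2 = (a + k, c)`. The diagonal from `V1` to `V2` meets each of the
columns `a, …, a + k - 1` and each of the rows `c, …, c + k - 1` in a square of `F`, so a full
placement has exactly `k` markers in that band of columns and `k` in that band of rows. Because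
`V1` and `V2` lie on the right/up border, the markers of the column band lie below height `c + k`
and those of the row band left of column `a + k`. Hence the rectangle `R(a + k, c + k)` holds
`N(F, V1) + k` markers, and also `N(F, V2) + k`.
-/

open Finset

theorem Finset.card_filter_apply_mem_of_injOn {α β : Type*} [DecidableEq β] {s : Finset α}
    {f : α → β} (hf : Set.InjOn f s) {t : Finset β} (ht : ∀ b ∈ t, ∃ a ∈ s, f a = b) :
    (s.filter (f · ∈ t)).card = t.card := by
  calc (s.filter (f · ∈ t)).card = ((s.filter (f · ∈ t)).image f).card :=
        (card_image_of_injOn (hf.mono (coe_subset.mpr (filter_subset _ _)))).symm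
    _ = t.card := by
      congr 1
      ext b
      simp only [mem_image, mem_filter]
      constructor
      · rintro ⟨a, ⟨-, ha⟩, rfl⟩
        exact ha
      · intro hb
        obtain ⟨a, ha, rfl⟩ := ht b hb
        exact ⟨a, ⟨ha, hb⟩, rfl⟩

namespace FerrersBoard

variable {n : ℕ} (F : FerrersBoard n)

theorem lt_colHeight_of_mem {x r : ℕ} (h : (x, r) ∈ F.squares) : r < F.colHeight x := by
  have hcol : (range (r + 1)).image (fun t => ((x, t) : Square)) ⊆
      F.squares.filter (fun s => s.1 = x) := by
    intro p hp
    obtain ⟨t, ht, rfl⟩ := mem_image.mp hp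
    exact mem_filter.mpr
      ⟨F.closed _ h (x, t) le_rfl (Nat.lt_succ_iff.mp (mem_range.mp ht)), rfl⟩
  simpa [colHeight, card_image_of_injective _ (Prod.mk_right_injective x)]
    using card_le_card hcol

theorem snd_lt_of_colHeight_le {a b : ℕ} (h : F.colHeight a ≤ b) {s : Square}
    (hs : s ∈ F.squares) (ha : a ≤ s.1) : s.2 < b :=
  (F.lt_colHeight_of_mem (F.closed s hs (a, s.2) ha le_rfl)).trans_le h

end FerrersBoard

section Placement

variable {n : ℕ} {F : FerrersBoard n} {P : Finset Square}

theorem IsRookPlacement.injOn_fst (hP : IsRookPlacement F P) :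
    Set.InjOn Prod.fst (P : Set Square) :=
  fun x hx y hy => hP.2.1 x hx y hy

theorem IsRookPlacement.injOn_snd (hP : IsRookPlacement F P) :
    Set.InjOn Prod.snd (P : Set Square) :=
  fun x hx y hy => hP.2.2 x hx y hy

theorem IsFullPlacement.card_filter_fst_mem {S : Finset ℕ} (hP : IsFullPlacement F P)
    (hS : ∀ c ∈ S, ∃ r, (c, r) ∈ F.squares) : (P.filter (·.1 ∈ S)).card = S.card :=
  card_filter_apply_mem_of_injOn (IsRookPlacement.injOn_fst hP.1) fun c hc => by
    obtain ⟨r, hr⟩ := hS c hc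
    obtain ⟨r', hr'⟩ := (hP.2 _ hr).1
    exact ⟨_, hr', rfl⟩

theorem IsFullPlacement.card_filter_snd_mem {S : Finset ℕ} (hP : IsFullPlacement F P)
    (hS : ∀ r ∈ S, ∃ c, (c, r) ∈ F.squares) : (P.filter (·.2 ∈ S)).card = S.card :=
  card_filter_apply_mem_of_injOn (IsRookPlacement.injOn_snd hP.1) fun r hr => by
    obtain ⟨c, hc⟩ := hS r hr
    obtain ⟨c', hc'⟩ := (hP.2 _ hc).2
    exact ⟨_, hc', rfl⟩

end Placement

theorem card_inter_RV_add_cols {P : Finset Square} {a b k : ℕ}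
    (h : ∀ p ∈ P, p.1 ∈ Ico a (a + k) → p.2 < b) :
    (P ∩ RV (a + k, b)).card =
      (P ∩ RV (a, b)).card + (P.filter (·.1 ∈ Ico a (a + k))).card := by
  rw [← card_union_of_disjoint]
  · congr 1
    ext p
    simp only [RV, mem_union, mem_inter, mem_filter, mem_product,
      mem_range, mem_Ico]
    constructor
    · rintro ⟨hp, h1, h2⟩
      rcases lt_or_ge p.1 a with ha | ha
      · exact Or.inl ⟨hp, ha, h2⟩
      · exact Or.inr ⟨hp, ha, h1⟩
    · rintro (⟨hp, h1, h2⟩ | ⟨hp, h1, h2⟩)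
      · exact ⟨hp, by omega, h2⟩
      · exact ⟨hp, h2, h p hp (mem_Ico.mpr ⟨h1, h2⟩)⟩
  · simp only [disjoint_left, RV, mem_inter, mem_filter, mem_product,
      mem_range, mem_Ico]
    omega

theorem card_inter_RV_add_rows {P : Finset Square} {a b k : ℕ}
    (h : ∀ p ∈ P, p.2 ∈ Ico b (b + k) → p.1 < a) :
    (P ∩ RV (a, b + k)).card =
      (P ∩ RV (a, b)).card + (P.filter (·.2 ∈ Ico b (b + k))).card := by
  rw [← card_union_of_disjoint]
  · congr 1
    ext p
    simp only [RV, mem_union, mem_inter, mem_filter, mem_product,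
      mem_range, mem_Ico]
    constructor
    · rintro ⟨hp, h1, h2⟩
      rcases lt_or_ge p.2 b with hb | hb
      · exact Or.inl ⟨hp, h1, hb⟩
      · exact Or.inr ⟨hp, hb, h2⟩
    · rintro (⟨hp, h1, h2⟩ | ⟨hp, h1, h2⟩)
      · exact ⟨hp, h1, by omega⟩
      · exact ⟨hp, h p hp (mem_Ico.mpr ⟨h1, h2⟩), h2⟩
  · simp only [disjoint_left, RV, mem_inter, mem_filter, mem_product,
      mem_range, mem_Ico]
    omega

/-- If `V1, V2` are `F`-diagonal vertices of a Ferrers board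
`F`, then `N(F,V1) = N(F,V2)`: every full rook placement on `F` has the same
number of markers in `R(V1)` as in `R(V2)`. -/
theorem marker_count_eq_of_diagonal {n : ℕ} (F : FerrersBoard n) (V1 V2 : ℕ × ℕ)
    (hdiag : F.DiagonalVertices V1 V2) (P : Finset Square)
    (hP : IsFullPlacement F P) :
    (P ∩ RV V1).card = (P ∩ RV V2).card := by
  obtain ⟨hV1, hV2, k, hk1, hk2, hsquares⟩ := hdiag
  obtain ⟨a, _⟩ := V1
  obtain ⟨_, c⟩ := V2
  dsimp only at hV1 hV2 hk1 hk2 hsquares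
  subst hk1 hk2
  have hcols := hP.card_filter_fst_mem (S := Ico a (a + k)) fun x hx => by
    obtain ⟨hax, hxk⟩ := mem_Ico.mp hx
    exact ⟨_, by simpa [Nat.add_sub_cancel' hax] using hsquares (x - a) (by omega)⟩
  have hrows := hP.card_filter_snd_mem (S := Ico c (c + k)) fun r hr => by
    obtain ⟨hcr, hrk⟩ := mem_Ico.mp hr
    have hsq := hsquares (c + k - 1 - r) (by omega)
    rw [show c + (k - 1 - (c + k - 1 - r)) = r by omega] at hsq
    exact ⟨_, hsq⟩
  have hcols_low : ∀ p ∈ P, p.1 ∈ Ico a (a + k) → p.2 < c + k := fun p hp hpa =>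
    F.snd_lt_of_colHeight_le hV1.2.1 (hP.1.1 hp) (mem_Ico.mp hpa).1
  have hrows_left : ∀ p ∈ P, p.2 ∈ Ico c (c + k) → p.1 < a + k := fun p hp hpc =>
    lt_of_not_ge fun hap =>
      (F.snd_lt_of_colHeight_le hV2.2.1 (hP.1.1 hp) hap).not_ge (mem_Ico.mp hpc).1
  calc (P ∩ RV (a, c + k)).card
      = (P ∩ RV (a + k, c + k)).card - k := by
        rw [card_inter_RV_add_cols hcols_low, hcols, Nat.card_Ico, add_tsub_cancel_left,
          add_tsub_cancel_right]
    _ = (P ∩ RV (a + k, c)).card := by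
        rw [card_inter_RV_add_rows hrows_left, hrows, Nat.card_Ico, add_tsub_cancel_left,
          add_tsub_cancel_right]
end
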